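/- arXiv:1406.5788 — 7 statements merged into one kernel-verified Lean document; each statement's English description precedes it below -/
import Mathlib

section
/- Let K be a field of characteristic zero, S ⊆ ℤ≥0 an additive semigroup containing 0, and S₀ ⊆ S a subset such that whenever s ∈ S₀ and s = s' + s'' with s', s'' ∈ S, then s' = 0 or s'' = 0. If α ∈ K[[t]] with α(0) ≠ 0 satisfies: (i) all exponents of α with nonzero coefficient lie in S, and (ii) every element of S₀ occurs as an exponent of α with nonzero coefficient; then the inverse γ = α⁻¹ also satisfies (i) and (ii). -/
/-!
Solving `α * α⁻¹ = 1` coefficientwise expresses the coefficient `γₙ` of `γ = α⁻¹` at `n > 0`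
through the products `aᵢ γⱼ` with `i + j = n`, `j < n`; by strong induction on `n` the support
of `γ` stays in `S`. At an indecomposable `s > 0` every such product with `i ≠ s` vanishes, so
`γₛ = -aₛ / a₀²`, which is nonzero together with `aₛ`.
-/

namespace PowerSeries

open Finset

variable {K : Type*} [Field K] {S : AddSubmonoid ℕ} {α : K⟦X⟧}

theorem mem_of_coeff_inv_ne_zero (hα : ∀ r, coeff r α ≠ 0 → r ∈ S) (n : ℕ)
    (hn : coeff n α⁻¹ ≠ 0) : n ∈ S := by
  induction n using Nat.strong_induction_on with
  | _ n ih =>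
    rcases eq_or_ne n 0 with rfl | hn0
    · exact S.zero_mem
    rw [coeff_inv, if_neg hn0] at hn
    obtain ⟨⟨i, j⟩, hij, hterm⟩ := exists_ne_zero_of_sum_ne_zero (right_ne_zero_of_mul hn)
    rw [HasAntidiagonal.mem_antidiagonal] at hij
    split_ifs at hterm with hj
    · exact hij ▸ S.add_mem (hα i (left_ne_zero_of_mul hterm))
        (ih j hj (right_ne_zero_of_mul hterm))
    · exact absurd rfl hterm

theorem coeff_inv_of_indecomposable (hα : ∀ r, coeff r α ≠ 0 → r ∈ S) {s : ℕ} (hs0 : s ≠ 0)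
    (hs : ∀ s' ∈ S, ∀ s'' ∈ S, s = s' + s'' → s' = 0 ∨ s'' = 0) :
    coeff s α⁻¹ = -(constantCoeff α)⁻¹ * (coeff s α * (constantCoeff α)⁻¹) := by
  rw [coeff_inv, if_neg hs0, sum_eq_single (s, 0)]
  · rw [if_pos (Nat.pos_of_ne_zero hs0), coeff_zero_eq_constantCoeff_apply, constantCoeff_inv]
  · rintro ⟨i, j⟩ hij hne
    rw [HasAntidiagonal.mem_antidiagonal] at hij
    split_ifs with hj
    · by_contra hterm
      rcases hs i (hα i (left_ne_zero_of_mul hterm)) j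
          (mem_of_coeff_inv_ne_zero hα j (right_ne_zero_of_mul hterm)) hij.symm with rfl | rfl
      · omega
      · exact hne (by rw [← hij, add_zero])
    · rfl
  · exact fun h ↦ absurd (HasAntidiagonal.mem_antidiagonal.mpr (add_zero s)) h

end PowerSeries

theorem inv_mem_O_star_general {K : Type*} [Field K]
    (S : AddSubmonoid ℕ) (S₀ : Set ℕ)
    (hind : ∀ s ∈ S₀, ∀ s' ∈ S, ∀ s'' ∈ S, s = s' + s'' → s' = 0 ∨ s'' = 0)
    (α : PowerSeries K)
    (h0 : PowerSeries.constantCoeff α ≠ 0)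
    (hsupp : ∀ r : ℕ, PowerSeries.coeff r α ≠ 0 → r ∈ S)
    (hstar : ∀ s ∈ S₀, PowerSeries.coeff s α ≠ 0) :
    (∀ r : ℕ, PowerSeries.coeff r α⁻¹ ≠ 0 → r ∈ S) ∧
      (∀ s ∈ S₀, PowerSeries.coeff s α⁻¹ ≠ 0) := by
  refine ⟨PowerSeries.mem_of_coeff_inv_ne_zero hsupp, fun s hs ↦ ?_⟩
  have hc := inv_ne_zero h0
  rcases eq_or_ne s 0 with rfl | hs0
  · rwa [PowerSeries.coeff_zero_eq_constantCoeff_apply, PowerSeries.constantCoeff_inv]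
  · rw [PowerSeries.coeff_inv_of_indecomposable hsupp hs0 (hind s hs)]
    exact mul_ne_zero (neg_ne_zero.mpr hc) (mul_ne_zero (hstar s hs) hc)

/-- Let `S ⊆ ℕ` be an additive submonoid and `S₀ ⊆ S` a set of
indecomposable elements of `S` (if `s ∈ S₀` and `s = s' + s''` with `s', s'' ∈ S`,
then `s' = 0` or `s'' = 0`).  If `α ∈ K[[t]]` has nonzero constant term, is supported
on `S`, and has nonzero coefficient at every element of `S₀`, then the inverse
`γ = α⁻¹` is supported on `S` and has nonzero coefficient at every element of `S₀`. -/
theorem inv_mem_O_star {K : Type*} [Field K] [CharZero K]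
    (S : AddSubmonoid ℕ) (S₀ : Set ℕ) (hS₀S : S₀ ⊆ (S : Set ℕ))
    (hind : ∀ s ∈ S₀, ∀ s' ∈ S, ∀ s'' ∈ S, s = s' + s'' → s' = 0 ∨ s'' = 0)
    (α : PowerSeries K)
    (h0 : PowerSeries.constantCoeff α ≠ 0)
    (hsupp : ∀ r : ℕ, PowerSeries.coeff r α ≠ 0 → r ∈ S)
    (hstar : ∀ s ∈ S₀, PowerSeries.coeff s α ≠ 0) :
    (∀ r : ℕ, PowerSeries.coeff r α⁻¹ ≠ 0 → r ∈ S) ∧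
      (∀ s ∈ S₀, PowerSeries.coeff s α⁻¹ ≠ 0) :=
  inv_mem_O_star_general S S₀ hind α h0 hsupp hstar
end

section
/- Let m be a nonzero integer and let α, γ ∈ K[[t]] with α(0) ≠ 0 satisfy (t·α(t))^m = t^m · γ(t) (as formal Laurent series when m < 0). Then for an additive semigroup S ⊆ ℤ≥0 containing 0, α is supported on S if and only if γ is supported on S. -/
/-!
Power series supported on `S` form a subalgebra `A`, and cancelling `t^m` turns the hypothesis
into `α ^ m = γ`, i.e. `γ = α ^ n` or `α ^ n * γ = 1` with `n = |m|`. So it suffices that `A` is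
closed under inverses and `n`-th roots of series with nonzero constant term. If `ψ ∉ A`, split it
at the first bad index `r ∉ S` as `ψ = β + X ^ r * δ` with `β ∈ A` and `δ(0) ≠ 0`. Then `φψ - φβ`,
resp. `α ^ n - β ^ n`, lies in `A` and is `X ^ r` times a series with constant term `φ(0) δ(0)`,
resp. `n α(0) ^ (n - 1) δ(0)`, which is nonzero in characteristic zero; but its `r`-th coefficient
must vanish.
-/

open PowerSeries

namespace PowerSeries

variable {R : Type*} [CommRing R] (S : AddSubmonoid ℕ)

def supportedOn : Subalgebra R R⟦X⟧ where
  carrier := {φ | ∀ r, coeff r φ ≠ 0 → r ∈ S}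
  mul_mem' {φ ψ} hφ hψ r hr := by
    contrapose! hr
    rw [coeff_mul]
    refine Finset.sum_eq_zero fun ⟨i, j⟩ hij => ?_
    rw [Finset.HasAntidiagonal.mem_antidiagonal] at hij
    by_contra hne
    exact hr (hij ▸ S.add_mem (hφ i (left_ne_zero_of_mul hne))
      (hψ j (right_ne_zero_of_mul hne)))
  add_mem' {φ ψ} hφ hψ r hr := by
    rw [map_add] at hr
    by_cases h : coeff r φ = 0
    · exact hψ r (by simpa [h] using hr)
    · exact hφ r h
  algebraMap_mem' c r hr := by
    rw [algebraMap_eq, coeff_C] at hr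
    obtain rfl : r = 0 := by by_contra h; simp [h] at hr
    exact S.zero_mem

variable {S}

theorem mem_supportedOn {φ : R⟦X⟧} : φ ∈ supportedOn S ↔ ∀ r, coeff r φ ≠ 0 → r ∈ S :=
  Iff.rfl

theorem coeff_eq_zero_of_mem_supportedOn {φ : R⟦X⟧} (hφ : φ ∈ supportedOn S) {r : ℕ}
    (hr : r ∉ S) : coeff r φ = 0 :=
  not_ne_iff.mp fun h => hr (hφ r h)

theorem constantCoeff_eq_zero_of_X_pow_mul_mem_supportedOn {χ : R⟦X⟧} {r : ℕ} (hr : r ∉ S)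
    (h : X ^ r * χ ∈ supportedOn S) : constantCoeff χ = 0 := by
  simpa [coeff_X_pow_mul'] using coeff_eq_zero_of_mem_supportedOn h hr

theorem exists_eq_add_X_pow_mul_of_notMem_supportedOn {ψ : R⟦X⟧} (hψ : ψ ∉ supportedOn S) :
    ∃ r ∉ S, ∃ β ∈ supportedOn S, ∃ δ : R⟦X⟧, constantCoeff δ ≠ 0 ∧ ψ = β + X ^ r * δ := by
  classical
  have hex : ∃ r, coeff r ψ ≠ 0 ∧ r ∉ S := by
    simpa [mem_supportedOn] using hψ
  set r := Nat.find hex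
  obtain ⟨hr, hrS⟩ := Nat.find_spec hex
  refine ⟨r, hrS, trunc r ψ, fun i hi => ?_, mk fun i => coeff (i + r) ψ, by simpa using hr,
    (eq_X_pow_mul_shift_add_trunc r ψ).trans (add_comm _ _)⟩
  rw [Polynomial.coeff_coe, coeff_trunc] at hi
  split_ifs at hi with hir
  · by_contra hiS
    exact Nat.find_min hex hir ⟨hi, hiS⟩
  · exact absurd rfl hi

variable [IsDomain R]

theorem mem_supportedOn_of_mul_mem {φ ψ : R⟦X⟧} (hφ : φ ∈ supportedOn S)
    (hφ0 : constantCoeff φ ≠ 0) (h : φ * ψ ∈ supportedOn S) : ψ ∈ supportedOn S := by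
  by_contra hψ
  obtain ⟨r, hr, β, hβ, δ, hδ, rfl⟩ := exists_eq_add_X_pow_mul_of_notMem_supportedOn hψ
  have hmem : X ^ r * (φ * δ) ∈ supportedOn S := by
    convert sub_mem h (mul_mem hφ hβ) using 1
    ring
  refine mul_ne_zero hφ0 hδ ?_
  simpa using constantCoeff_eq_zero_of_X_pow_mul_mem_supportedOn hr hmem

theorem mem_supportedOn_of_pow_mem [CharZero R] {α : R⟦X⟧} {n : ℕ} (hn : n ≠ 0)
    (h0 : constantCoeff α ≠ 0) (h : α ^ n ∈ supportedOn S) : α ∈ supportedOn S := by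
  by_contra hα
  obtain ⟨r, hr, β, hβ, δ, hδ, hαβ⟩ := exists_eq_add_X_pow_mul_of_notMem_supportedOn hα
  have hr0 : r ≠ 0 := fun hr0 => hr (hr0 ▸ S.zero_mem)
  have hβ0 : constantCoeff β = constantCoeff α := by simp [hαβ, hr0]
  set σ := ∑ i ∈ Finset.range n, α ^ i * β ^ (n - 1 - i)
  have hmem : X ^ r * (δ * σ) ∈ supportedOn S := by
    convert sub_mem h (pow_mem hβ n) using 1
    rw [← geom_sum₂_mul, show α - β = X ^ r * δ by rw [hαβ]; ring]
    ring
  have hσ : constantCoeff σ = n * constantCoeff α ^ (n - 1) := by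
    simp only [σ, map_sum, map_mul, map_pow, hβ0, geom_sum₂_self]
  have hσ0 : constantCoeff σ ≠ 0 := by
    rw [hσ]
    exact mul_ne_zero (Nat.cast_ne_zero.mpr hn) (pow_ne_zero _ h0)
  refine mul_ne_zero hδ hσ0 ?_
  simpa using constantCoeff_eq_zero_of_X_pow_mul_mem_supportedOn hr hmem

theorem mem_supportedOn_pow_iff [CharZero R] {α : R⟦X⟧} {n : ℕ} (hn : n ≠ 0)
    (h0 : constantCoeff α ≠ 0) : α ^ n ∈ supportedOn S ↔ α ∈ supportedOn S :=
  ⟨mem_supportedOn_of_pow_mem hn h0, fun h => pow_mem h n⟩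

theorem mem_supportedOn_iff_of_mul_eq_one {φ ψ : R⟦X⟧} (h : φ * ψ = 1) :
    φ ∈ supportedOn S ↔ ψ ∈ supportedOn S := by
  have h0 : constantCoeff φ * constantCoeff ψ = 1 := by rw [← map_mul, h, map_one]
  refine ⟨fun hφ => ?_, fun hψ => ?_⟩
  · exact mem_supportedOn_of_mul_mem hφ (left_ne_zero_of_mul_eq_one h0) (h ▸ one_mem _)
  · exact mem_supportedOn_of_mul_mem hψ (right_ne_zero_of_mul_eq_one h0)
      (mul_comm φ ψ ▸ h ▸ one_mem _)

end PowerSeries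

theorem LaurentSeries.ofPowerSeries_X_mul_zpow {K : Type*} [Field K] (α : K⟦X⟧) (m : ℤ) :
    (HahnSeries.ofPowerSeries ℤ K (X * α) : LaurentSeries K) ^ m =
      HahnSeries.single m 1 * HahnSeries.ofPowerSeries ℤ K α ^ m := by
  rw [map_mul, HahnSeries.ofPowerSeries_X, mul_zpow, ← RatFunc.single_zpow]

/-- Let `m` be a nonzero integer and `α, γ ∈ K[[t]]` with `α(0) ≠ 0`
satisfy `(t·α(t))^m = t^m·γ(t)` as formal Laurent series.  Then for an additive
submonoid `S ⊆ ℕ`, `α` is supported on `S` if and only if `γ` is supported on `S`. -/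
theorem zpow_support_iff {K : Type*} [Field K] [CharZero K]
    (S : AddSubmonoid ℕ) (m : ℤ) (hm : m ≠ 0)
    (α γ : PowerSeries K) (h0 : PowerSeries.constantCoeff α ≠ 0)
    (heq : (HahnSeries.ofPowerSeries ℤ K (PowerSeries.X * α) : LaurentSeries K) ^ m =
      HahnSeries.single m (1 : K) * HahnSeries.ofPowerSeries ℤ K γ) :
    (∀ r : ℕ, PowerSeries.coeff r α ≠ 0 → r ∈ S) ↔
      (∀ r : ℕ, PowerSeries.coeff r γ ≠ 0 → r ∈ S) := by
  have hγ : (HahnSeries.ofPowerSeries ℤ K α : LaurentSeries K) ^ m =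
      HahnSeries.ofPowerSeries ℤ K γ :=
    mul_left_cancel₀ (HahnSeries.single_ne_zero one_ne_zero)
      ((LaurentSeries.ofPowerSeries_X_mul_zpow α m).symm.trans heq)
  change α ∈ supportedOn S ↔ γ ∈ supportedOn S
  obtain ⟨n, rfl | rfl⟩ := m.eq_nat_or_neg
  · have hn : n ≠ 0 := by exact_mod_cast hm
    rw [zpow_natCast, ← map_pow] at hγ
    rw [← HahnSeries.ofPowerSeries_injective hγ, mem_supportedOn_pow_iff hn h0]
  · have hn : n ≠ 0 := by simpa using hm
    have hαn : (HahnSeries.ofPowerSeries ℤ K (α ^ n) : LaurentSeries K) ≠ 0 := by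
      rw [map_ne_zero_iff _ HahnSeries.ofPowerSeries_injective]
      exact pow_ne_zero n (ne_of_apply_ne constantCoeff (by simpa using h0))
    rw [zpow_neg, zpow_natCast, ← map_pow] at hγ
    have hinv : α ^ n * γ = 1 := HahnSeries.ofPowerSeries_injective (Γ := ℤ) <| by
      rw [map_mul, map_one, ← hγ, mul_inv_cancel₀ hαn]
    rw [← mem_supportedOn_pow_iff hn h0, mem_supportedOn_iff_of_mul_eq_one hinv]
end

section
/- Let α ∈ K[[t]] with α(0) ≠ 0, and let β ∈ K[[t]] be such that the substitution t = u·β(u) solves the equation u = t·α(t) (i.e., u = u·β(u)·α(u·β(u))). Then for an additive semigroup S ⊆ ℤ≥0 containing 0, α is supported on S if and only if β is supported on S. -/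
/-- `Composed S Y Z` says that `Z = Y ∘ S` (substitution of the power series `S`,
assumed to have zero constant term, into `Y`), expressed coefficientwise. -/
def Composed {K : Type*} [Field K] (S Y Z : PowerSeries K) : Prop :=
  ∀ n : ℕ, PowerSeries.coeff n Z =
    ∑ k ∈ Finset.range (n + 1), PowerSeries.coeff k Y * PowerSeries.coeff n (S ^ k)

/-!
Comparing coefficients of `u` in `u = u β(u) · α(u β(u))` gives, for `n ≥ 1`,
`0 = ∑_{k ≤ n} α_k [u^{n-k}] β^{k+1}`, and `α_0 β_0 = 1`. The term `k = 0` is `α_0 β_n`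
and the term `k = n` is `α_n β_0^{n+1}`. So if one of `α_n`, `β_n` is nonzero, some other
term `α_k [u^{n-k}] β^{k+1}` is nonzero, and `n = k + (n - k)` is a sum of two elements
of `S` by strong induction on `n`, since a nonzero coefficient of a power of `β` sits at
a sum of exponents of nonzero coefficients of `β`.
-/

open PowerSeries Finset

theorem Finset.exists_ne_ne_zero_of_sum_eq_zero {ι M : Type*} [AddCommGroup M] [DecidableEq ι]
    {s : Finset ι} {f : ι → M} {i : ι} (hs : ∑ j ∈ s, f j = 0) (hi : i ∈ s)
    (hfi : f i ≠ 0) :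
    ∃ j ∈ s, j ≠ i ∧ f j ≠ 0 := by
  have hrest : ∑ j ∈ s.erase i, f j ≠ 0 := by
    rwa [sum_erase_eq_sub hi, hs, zero_sub, neg_ne_zero]
  obtain ⟨j, hj, hfj⟩ := exists_ne_zero_of_sum_ne_zero hrest
  exact ⟨j, mem_of_mem_erase hj, ne_of_mem_erase hj, hfj⟩

namespace PowerSeries

variable {R : Type*} [Semiring R] (S : AddSubmonoid ℕ)

theorem mem_of_coeff_mul_ne_zero {f g : R⟦X⟧} {n : ℕ}
    (hf : ∀ i ≤ n, coeff i f ≠ 0 → i ∈ S) (hg : ∀ i ≤ n, coeff i g ≠ 0 → i ∈ S)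
    (h : coeff n (f * g) ≠ 0) : n ∈ S := by
  rw [coeff_mul] at h
  obtain ⟨⟨a, b⟩, hab, hne⟩ := exists_ne_zero_of_sum_ne_zero h
  rw [HasAntidiagonal.mem_antidiagonal] at hab
  rw [← hab]
  exact S.add_mem (hf a (by omega) (left_ne_zero_of_mul hne))
    (hg b (by omega) (right_ne_zero_of_mul hne))

theorem mem_of_coeff_pow_ne_zero {f : R⟦X⟧} {n : ℕ}
    (hf : ∀ i ≤ n, coeff i f ≠ 0 → i ∈ S) (k : ℕ) :
    ∀ i ≤ n, coeff i (f ^ k) ≠ 0 → i ∈ S := by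
  induction k with
  | zero =>
    intro i _ h
    obtain rfl : i = 0 := by
      by_contra hi0
      simp [coeff_one, hi0] at h
    exact S.zero_mem
  | succ k ih =>
    intro i hi h
    rw [pow_succ] at h
    exact mem_of_coeff_mul_ne_zero S (fun j hj => ih j (hj.trans hi))
      (fun j hj => hf j (hj.trans hi)) h

end PowerSeries

namespace Composed

variable {K : Type*} [Field K] {α β : K⟦X⟧}

theorem coeff_X_succ_eq_sum (h : Composed (X * β) (X * α) X) (n : ℕ) :
    coeff (n + 1) (X : K⟦X⟧) =
      ∑ k ∈ range (n + 1), coeff k α * coeff (n - k) (β ^ (k + 1)) := by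
  rw [h, sum_range_succ', pow_zero, coeff_one, if_neg n.succ_ne_zero, mul_zero, add_zero]
  refine sum_congr rfl fun k hk => ?_
  rw [coeff_succ_X_mul, mul_pow, coeff_X_pow_mul', if_pos (by grind), Nat.succ_sub_succ]

theorem coeff_zero_mul_coeff_zero (h : Composed (X * β) (X * α) X) :
    coeff 0 α * coeff 0 β = 1 := by
  simpa using (h.coeff_X_succ_eq_sum 0).symm

theorem sum_eq_zero (h : Composed (X * β) (X * α) X) {n : ℕ} (hn : n ≠ 0) :
    ∑ k ∈ range (n + 1), coeff k α * coeff (n - k) (β ^ (k + 1)) = 0 := by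
  rw [← h.coeff_X_succ_eq_sum, coeff_X, if_neg (by omega)]

variable (S : AddSubmonoid ℕ)

theorem inv_supported_of_supported (h : Composed (X * β) (X * α) X)
    (hα : ∀ r, coeff r α ≠ 0 → r ∈ S) : ∀ r, coeff r β ≠ 0 → r ∈ S := by
  intro n
  induction n using Nat.strong_induction_on with
  | _ n ih =>
  intro hn
  rcases eq_or_ne n 0 with rfl | hn0
  · exact S.zero_mem
  have hfirst : coeff 0 α * coeff (n - 0) (β ^ (0 + 1)) ≠ 0 := by
    rw [Nat.sub_zero, zero_add, pow_one]
    exact mul_ne_zero (left_ne_zero_of_mul_eq_one h.coeff_zero_mul_coeff_zero) hn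
  obtain ⟨k, hk, hk0, hterm⟩ := exists_ne_ne_zero_of_sum_eq_zero (h.sum_eq_zero hn0)
    (mem_range.2 n.succ_pos) hfirst
  rw [mem_range] at hk
  have hkS : k ∈ S := hα k (left_ne_zero_of_mul hterm)
  have hrest : n - k ∈ S := mem_of_coeff_pow_ne_zero S (fun i hi => ih i (by omega)) _ _
    le_rfl (right_ne_zero_of_mul hterm)
  rw [← Nat.add_sub_cancel' (by omega : k ≤ n)]
  exact S.add_mem hkS hrest

theorem supported_of_inv_supported (h : Composed (X * β) (X * α) X)
    (hβ : ∀ r, coeff r β ≠ 0 → r ∈ S) : ∀ r, coeff r α ≠ 0 → r ∈ S := by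
  intro n
  induction n using Nat.strong_induction_on with
  | _ n ih =>
  intro hn
  rcases eq_or_ne n 0 with rfl | hn0
  · exact S.zero_mem
  have hlast : coeff n α * coeff (n - n) (β ^ (n + 1)) ≠ 0 := by
    rw [Nat.sub_self, coeff_zero_eq_constantCoeff_apply, map_pow,
      ← coeff_zero_eq_constantCoeff_apply]
    exact mul_ne_zero hn
      (pow_ne_zero _ (right_ne_zero_of_mul_eq_one h.coeff_zero_mul_coeff_zero))
  obtain ⟨k, hk, hkn, hterm⟩ := exists_ne_ne_zero_of_sum_eq_zero (h.sum_eq_zero hn0)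
    (mem_range.2 n.lt_succ_self) hlast
  rw [mem_range] at hk
  have hkS : k ∈ S := ih k (by omega) (left_ne_zero_of_mul hterm)
  have hrest : n - k ∈ S := mem_of_coeff_pow_ne_zero S (fun i _ => hβ i) _ _
    le_rfl (right_ne_zero_of_mul hterm)
  rw [← Nat.add_sub_cancel' (by omega : k ≤ n)]
  exact S.add_mem hkS hrest

end Composed

theorem compositional_inverse_support_iff_general {K : Type*} [Field K]
    (S : AddSubmonoid ℕ) (α β : PowerSeries K)
    (hβ : Composed (PowerSeries.X * β) (PowerSeries.X * α) PowerSeries.X) :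
    (∀ r : ℕ, PowerSeries.coeff r α ≠ 0 → r ∈ S) ↔
      (∀ r : ℕ, PowerSeries.coeff r β ≠ 0 → r ∈ S) :=
  ⟨hβ.inv_supported_of_supported S, hβ.supported_of_inv_supported S⟩

/-- Let `α ∈ K[[t]]` with `α(0) ≠ 0` and let `β ∈ K[[t]]` be such that
the substitution `t = u·β(u)` solves `u = t·α(t)`, i.e. `(t·α(t)) ∘ (u·β(u)) = u`.
Then for an additive submonoid `S ⊆ ℕ`, `α` is supported on `S` iff `β` is supported
on `S`. -/
theorem compositional_inverse_support_iff {K : Type*} [Field K] [CharZero K]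
    (S : AddSubmonoid ℕ) (α β : PowerSeries K)
    (h0 : PowerSeries.constantCoeff α ≠ 0)
    (hβ : Composed (PowerSeries.X * β) (PowerSeries.X * α) PowerSeries.X) :
    (∀ r : ℕ, PowerSeries.coeff r α ≠ 0 → r ∈ S) ↔
      (∀ r : ℕ, PowerSeries.coeff r β ≠ 0 → r ∈ S) :=
  compositional_inverse_support_iff_general S α β hβ
end

section
/- Let f ∈ K((x^{1/q})) have order -p/q with p, q positive coprime integers or more generally with the image of f in R_q^o, and suppose p ≥ q. If E_{f,q} has dual Puiseux characteristic (q, p; β₁, …, β_g), then the associated plane curve germ C_{f,q}(x,y) = ∏_{k=1}^q (y - 1/f(ζ_q^k x^{1/q})) has Puiseux characteristic (q; 2p - β₁, …, 2p - β_g). -/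
/-!
Write `G = F⁻¹`, so that `G` has order `p`, and fix `m = e k`, `b = β (k + 1)`. If `m ∤ p`, then
`-p` is itself the first exponent of `F` not divisible by `m`, so `b = p` and `2p - b = p` is the
order of `G`. If `m ∣ p`, compare coefficients in `F * G = 1`. In degree `c - p`, for `c < 2p - b`
with `m ∤ c`, every term other than `F_{-p} G_c` pairs either an exponent `≥ -b` of `F` with an
exponent `< p` of `G`, or an `m`-divisible exponent of `F` with a smaller exponent of `G` that is
again not divisible by `m`; by induction `G_c = 0`. In degree `p - b` only two terms remain,
`F_{-b} G_p + F_{-p} G_{2p-b} = 0`, so `G_{2p-b} ≠ 0`. The gcds agree because `m ∣ 2p`.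
-/

/-- The conjugate `F(c·t)` of a formal Laurent series `F(t)`:
the `n`-th coefficient is multiplied by `c^n` (with `zpow` in the field `K`). -/
noncomputable def LaurentSeries.conjRoot {K : Type*} [Field K] (c : K) (F : LaurentSeries K) :
    LaurentSeries K where
  coeff n := c ^ n * F.coeff n
  isPWO_support' := F.isPWO_support.mono (fun n hn => by
    simp only [Function.mem_support] at hn ⊢
    exact fun h => hn (by simp [h]))

/-- The ring homomorphism `K[[x]] → K((t))` sending `x` to `t^N` (for `N > 0`). -/
noncomputable def xpowHom (K : Type*) [Field K] (N : ℕ) (hN : 0 < N) :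
    PowerSeries K →+* LaurentSeries K :=
  (HahnSeries.embDomainRingHom (AddMonoidHom.mk' (fun n : ℤ => (N : ℤ) * n) (by intro a b; ring))
    (fun a b h => mul_left_cancel₀ (show (N : ℤ) ≠ 0 by exact_mod_cast hN.ne') h)
    (fun g g' => mul_le_mul_iff_right₀ (show (0 : ℤ) < (N : ℤ) by exact_mod_cast hN))).comp
    (HahnSeries.ofPowerSeries ℤ K)

/-- `DualChar q supp g β e` : the Laurent series (in `t = x^{1/q}`) with support `supp ⊆ ℤ`
has dual Puiseux characteristic `(q, -; β 1, …, β g)` with gcd sequence `e 0 = q, …, e g = 1`: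
for each `k < g`, `-β (k+1)` is the least exponent in the support not divisible by `e k`,
and `e (k+1) = gcd (e k) (β (k+1))`. -/
def DualChar (q : ℕ) (supp : ℤ → Prop) (g : ℕ) (β : ℕ → ℕ) (e : ℕ → ℕ) : Prop :=
  e 0 = q ∧ e g = 1 ∧ ∀ k < g,
    supp (-(β (k + 1) : ℤ)) ∧ ¬ ((e k : ℤ) ∣ (β (k + 1) : ℤ)) ∧
    (∀ i : ℤ, supp i → ¬ ((e k : ℤ) ∣ i) → -(β (k + 1) : ℤ) ≤ i) ∧
    e (k + 1) = Nat.gcd (e k) (β (k + 1))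

/-- `PCharZ m supp g β e` : the Puiseux characteristic `(m; β 1, …, β g)` of a
parametrization `x = t^m`, `y = ∑ c_i t^i` with support `supp ⊆ ℤ`:
for each `k < g`, `β (k+1)` is the least exponent in the support not divisible by
`e k`, with gcd sequence `e 0 = m`, `e (k+1) = gcd (e k) (β (k+1))`, `e g = 1`. -/
def PCharZ (m : ℕ) (supp : ℤ → Prop) (g : ℕ) (β : ℕ → ℕ) (e : ℕ → ℕ) : Prop :=
  e 0 = m ∧ e g = 1 ∧ ∀ k < g,
    supp (β (k + 1) : ℤ) ∧ ¬ ((e k : ℤ) ∣ (β (k + 1) : ℤ)) ∧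
    (∀ i : ℤ, supp i → ¬ ((e k : ℤ) ∣ i) → (β (k + 1) : ℤ) ≤ i) ∧
    e (k + 1) = Nat.gcd (e k) (β (k + 1))

/-- `PCharN` : as `PCharZ`, for supports indexed by `ℕ` (power series parametrizations). -/
def PCharN (m : ℕ) (supp : ℕ → Prop) (g : ℕ) (β : ℕ → ℕ) (e : ℕ → ℕ) : Prop :=
  e 0 = m ∧ e g = 1 ∧ ∀ k < g,
    supp (β (k + 1)) ∧ ¬ (e k ∣ β (k + 1)) ∧
    (∀ i : ℕ, supp i → ¬ (e k ∣ i) → β (k + 1) ≤ i) ∧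
    e (k + 1) = Nat.gcd (e k) (β (k + 1))

/-- `RamIrred q N F` : the element `f ∈ K((x^{1/q}))`, expanded as the Laurent series `F`
in the variable `u = x^{1/N}` (where `q ∣ N`), has irreducible associated connection
`E_{f,q}`, i.e. its image in `R_q` cannot be represented by an element of `K((x^{1/d}))`
for any proper divisor `d` of `q`. -/
def RamIrred {K : Type*} [Field K] (q N : ℕ) (F : LaurentSeries K) : Prop :=
  ∀ d : ℕ, d ∣ q → d < q → ¬ (∀ n : ℤ, n < 0 → F.coeff n ≠ 0 → ((N / d : ℕ) : ℤ) ∣ n)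


open HahnSeries

theorem HahnSeries.coeff_mul_eq_sum_of_subset {Γ R : Type*} [AddCommGroup Γ] [PartialOrder Γ]
    [IsOrderedAddMonoid Γ] [NonUnitalNonAssocSemiring R] (x y : HahnSeries Γ R) {n : Γ}
    {s : Finset Γ} (hs : ∀ i, x.coeff i ≠ 0 → y.coeff (n - i) ≠ 0 → i ∈ s) :
    (x * y).coeff n = ∑ i ∈ s, x.coeff i * y.coeff (n - i) := by
  rw [coeff_mul]
  refine Finset.sum_bij_ne_zero (fun ij _ _ => ij.1) ?_ ?_ ?_ ?_
  · rintro ⟨i, j⟩ hij -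
    obtain ⟨hi, hj, rfl⟩ := Finset.mem_antidiagonal.1 hij
    exact hs i hi (by simpa using hj)
  · rintro ⟨i, j⟩ hij - ⟨i', j'⟩ hij' - (rfl : i = i')
    obtain ⟨-, -, h⟩ := Finset.mem_antidiagonal.1 hij
    obtain ⟨-, -, h'⟩ := Finset.mem_antidiagonal.1 hij'
    simp only [Prod.mk.injEq, true_and]
    exact add_left_cancel (h.trans h'.symm)
  · intro i _ hne
    exact ⟨(i, n - i), Finset.mem_antidiagonal.2
      ⟨left_ne_zero_of_mul hne, right_ne_zero_of_mul hne, add_sub_cancel _ _⟩, hne, rfl⟩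
  · rintro ⟨i, j⟩ hij -
    obtain ⟨-, -, rfl⟩ := Finset.mem_antidiagonal.1 hij
    simp

namespace LaurentSeries

variable {K : Type*} [Field K] {F : LaurentSeries K} {p m b : ℤ}

theorem order_inv (hF : F ≠ 0) : F⁻¹.order = -F.order := by
  have h := order_mul_of_ne_zero (x := F) (y := F⁻¹) <| mul_ne_zero
    (leadingCoeff_ne_zero.2 hF) (leadingCoeff_ne_zero.2 (inv_ne_zero hF))
  rw [mul_inv_cancel₀ hF, order_one] at h
  linarith

theorem dvd_or_eq_of_isLeast_support_not_dvd (hF : F ≠ 0) (hord : F.order = -p)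
    (hb : IsLeast {i ∈ F.support | ¬ m ∣ i} (-b)) : m ∣ p ∨ b = p := by
  refine or_iff_not_imp_left.2 fun hmp => ?_
  have hle : -b ≤ -p := hb.2 ⟨hord ▸ coeff_order_eq_zero.not.2 hF, by rwa [dvd_neg]⟩
  have hge : -p ≤ -b := hord ▸ order_le_of_coeff_ne_zero hb.1.1
  omega

theorem coeff_inv_eq_zero_of_not_dvd_of_lt (hF : F ≠ 0) (hord : F.order = -p) (hmp : m ∣ p)
    (hb : IsLeast {i ∈ F.support | ¬ m ∣ i} (-b)) {c : ℤ} (hmc : ¬ m ∣ c)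
    (hc : c < 2 * p - b) : F⁻¹.coeff c = 0 := by
  have hinv : F⁻¹.order = p := by rw [order_inv hF, hord, neg_neg]
  by_contra hc0
  revert hmc hc
  refine (F⁻¹).isWF_support.induction (P := fun c => ¬ m ∣ c → c < 2 * p - b → False) hc0 ?_
  intro c hc0 IH hmc hc
  have hcoeff := coeff_mul_eq_sum_of_subset F F⁻¹ (n := c - p) (s := {-p}) <| by
    intro i hi hj
    have hpi : -p ≤ i := hord ▸ order_le_of_coeff_ne_zero hi
    have hpj : p ≤ c - p - i := hinv.symm.trans_le (order_le_of_coeff_ne_zero hj)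
    rw [Finset.mem_singleton]
    by_contra hne
    by_cases hmi : m ∣ i
    · refine IH _ hj (by omega) (fun h => hmc ?_) (by omega)
      exact (dvd_sub_left (dvd_add hmp hmi)).1 (by rwa [← sub_sub])
    · have := hb.2 ⟨hi, hmi⟩
      omega
  rw [mul_inv_cancel₀ hF, coeff_one, if_neg (by rintro h; exact hmc (by rwa [sub_eq_zero.1 h])),
    Finset.sum_singleton, sub_neg_eq_add, sub_add_cancel] at hcoeff
  exact mul_ne_zero (hord ▸ coeff_order_eq_zero.not.2 hF) hc0 hcoeff.symm

theorem coeff_inv_two_mul_sub_ne_zero (hF : F ≠ 0) (hord : F.order = -p) (hmp : m ∣ p)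
    (hb : IsLeast {i ∈ F.support | ¬ m ∣ i} (-b)) : F⁻¹.coeff (2 * p - b) ≠ 0 := by
  have hinv : F⁻¹.order = p := by rw [order_inv hF, hord, neg_neg]
  have hmb : ¬ m ∣ p - b := fun h => hb.1.2 (dvd_neg.2 ((dvd_sub_right hmp).1 h))
  have hbp : -b ≠ -p := fun h => hmb (by rw [neg_inj.1 h, sub_self]; exact dvd_zero m)
  have hcoeff := coeff_mul_eq_sum_of_subset F F⁻¹ (n := p - b) (s := {-b, -p}) <| by
    intro i hi hj
    have hpi : -p ≤ i := hord ▸ order_le_of_coeff_ne_zero hi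
    have hpj : p ≤ p - b - i := hinv.symm.trans_le (order_le_of_coeff_ne_zero hj)
    rw [Finset.mem_insert, Finset.mem_singleton]
    by_contra! hne
    have hmi : m ∣ i := by
      by_contra hmi
      have := hb.2 ⟨hi, hmi⟩
      omega
    exact hj (coeff_inv_eq_zero_of_not_dvd_of_lt hF hord hmp hb
      (fun h => hmb ((dvd_sub_left hmi).1 h)) (by omega))
  rw [mul_inv_cancel₀ hF, coeff_one, if_neg (fun h => hmb (by rw [h]; exact dvd_zero m)),
    Finset.sum_pair hbp, show p - b - -b = p by ring, show p - b - -p = 2 * p - b by ring]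
    at hcoeff
  intro h
  rw [h, mul_zero, add_zero] at hcoeff
  exact mul_ne_zero hb.1.1 (hinv ▸ coeff_order_eq_zero.not.2 (inv_ne_zero hF)) hcoeff.symm

theorem isLeast_support_inv_not_dvd (hF : F ≠ 0) (hord : F.order = -p)
    (hb : IsLeast {i ∈ F.support | ¬ m ∣ i} (-b)) :
    IsLeast {i ∈ F⁻¹.support | ¬ m ∣ i} (2 * p - b) := by
  have hinv : F⁻¹.order = p := by rw [order_inv hF, hord, neg_neg]
  rcases dvd_or_eq_of_isLeast_support_not_dvd hF hord hb with hmp | hbp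
  · refine ⟨⟨coeff_inv_two_mul_sub_ne_zero hF hord hmp hb, fun h => hb.1.2 ?_⟩, fun i ⟨hi, hmi⟩ => ?_⟩
    · exact dvd_neg.2 ((dvd_sub_right (dvd_mul_of_dvd_right hmp 2)).1 h)
    · by_contra! hlt
      exact hi (coeff_inv_eq_zero_of_not_dvd_of_lt hF hord hmp hb hmi hlt)
  · rw [show 2 * p - b = p by omega]
    refine ⟨⟨hinv ▸ coeff_order_eq_zero.not.2 (inv_ne_zero hF), fun h => hb.1.2 ?_⟩,
      fun i hi => hinv ▸ order_le_of_coeff_ne_zero hi.1⟩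
    rwa [hbp, dvd_neg]

end LaurentSeries

theorem dualPuiseux_to_puiseux_of_le_general {K : Type*} [Field K]
    (q p : ℕ)
    (F : LaurentSeries K)
    (hFlow : ∀ n : ℤ, n < -(p : ℤ) → F.coeff n = 0)
    (hFlead : F.coeff (-(p : ℤ)) ≠ 0)
    (g : ℕ) (β e : ℕ → ℕ)
    (hchar : DualChar q (fun n => F.coeff n ≠ 0) g β e) :
    ∃ e' : ℕ → ℕ,
      PCharZ q (fun i => (F⁻¹).coeff i ≠ 0) g (fun k => 2 * p - β k) e' := by
  obtain ⟨he0, heg, hk⟩ := hchar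
  have hF : F ≠ 0 := ne_zero_of_coeff_ne_zero hFlead
  have hord : F.order = -p := le_antisymm (order_le_of_coeff_ne_zero hFlead) <|
    le_of_not_gt fun h => coeff_order_eq_zero.not.2 hF (hFlow _ h)
  refine ⟨e, he0, heg, fun k hkg => ?_⟩
  obtain ⟨hsupp, hndvd, hmin, hgcd⟩ := hk k hkg
  have hleast : IsLeast {i ∈ F.support | ¬ (e k : ℤ) ∣ i} (-β (k + 1)) :=
    ⟨⟨hsupp, by rwa [dvd_neg]⟩, fun i hi => hmin i hi.1 hi.2⟩
  have hβp : (β (k + 1) : ℤ) ≤ p := neg_le_neg_iff.1 (hord ▸ order_le_of_coeff_ne_zero hsupp)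
  have hcast : ((2 * p - β (k + 1) : ℕ) : ℤ) = 2 * p - β (k + 1) := by omega
  obtain ⟨⟨hsupp', hndvd'⟩, hmin'⟩ := LaurentSeries.isLeast_support_inv_not_dvd hF hord hleast
  refine ⟨hcast ▸ hsupp', hcast ▸ hndvd', fun i hi hmi => hcast ▸ hmin' ⟨hi, hmi⟩, ?_⟩
  rw [hgcd]
  change _ = Nat.gcd (e k) (2 * p - β (k + 1))
  rcases LaurentSeries.dvd_or_eq_of_isLeast_support_not_dvd hF hord hleast with hmp | hβ
  · exact (Nat.gcd_sub_left_right_of_dvd _ (by omega)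
      (dvd_mul_of_dvd_right (Int.natCast_dvd_natCast.1 hmp) 2)).symm
  · rw [show 2 * p - β (k + 1) = β (k + 1) by omega]

/-- Let `f ∈ K((x^{1/q}))` have order `-p/q` with `p ≥ q > 0`, define an
irreducible connection `E_{f,q}`, and have dual Puiseux characteristic
`(q, p; β 1, …, β g)`.  Here `F` is the expansion of `f` in the variable `t = x^{1/q}`.
Then the associated plane curve germ `C_{f,q}`, with good parametrization `x = t^q`,
`y = 1/f = F⁻¹`, has Puiseux characteristic `(q; 2p - β 1, …, 2p - β g)`. -/
theorem dualPuiseux_to_puiseux_of_le {K : Type*} [Field K] [CharZero K] [IsAlgClosed K]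
    (q p : ℕ) (hq : 0 < q) (hp : 0 < p) (hqp : q ≤ p)
    (F : LaurentSeries K)
    (hFlow : ∀ n : ℤ, n < -(p : ℤ) → F.coeff n = 0)
    (hFlead : F.coeff (-(p : ℤ)) ≠ 0)
    (hirr : RamIrred q q F)
    (g : ℕ) (β e : ℕ → ℕ)
    (hchar : DualChar q (fun n => F.coeff n ≠ 0) g β e) :
    ∃ e' : ℕ → ℕ,
      PCharZ q (fun i => (F⁻¹).coeff i ≠ 0) g (fun k => 2 * p - β k) e' :=
  dualPuiseux_to_puiseux_of_le_general q p F hFlow hFlead g β e hchar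
end

section
/- Let E_{f,q} be an irreducible connection with dual Puiseux characteristic (q, p; β₁, …, β_g) and associated gcd sequence e₀ = q, e_k = gcd(e_{k-1}, β_k). Then Irr(End_{K((x))}(E_{f,q})) = ∑_{i=1}^{g} (e_{i-1} - e_i)·β_i. -/
lemma conjRoot_coeff {K : Type*} [Field K] (c : K) (F : LaurentSeries K) (n : ℤ) :
    (LaurentSeries.conjRoot c F).coeff n = c ^ n * F.coeff n := rfl
/-!
The conjugates `f_i` and `f_j` differ exactly in the monomials `t ^ n` with `q ∤ (i - j) n`. If
`q ∣ e k (i - j)` but `q ∤ e (k + 1) (i - j)`, the monomials of `f` below `t ^ (-β (k + 1))` all have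
`e k ∣ n` and cancel, while `e (k + 1) = gcd (e k) (β (k + 1))` keeps `t ^ (-β (k + 1))` alive; so
`-ord (f_i - f_j) = β (k + 1)`. Written as a telescoping sum of the indicators of `q ∣ e k (i - j)`,
the sum over all pairs `(i, j)` reduces to counting, for each divisor `c` of `q`, the pairs with
`q ∣ c (i - j)`: there are `q c` of them.
-/

open Finset

namespace HahnSeries

variable {Γ R : Type*} [AddCommMonoid Γ] [LinearOrder Γ] [IsOrderedCancelAddMonoid Γ]
  [CommSemiring R] [NoZeroDivisors R] [Nontrivial R]

theorem orderTop_prod {ι : Type*} (s : Finset ι) (f : ι → HahnSeries Γ R) :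
    (∏ i ∈ s, f i).orderTop = ∑ i ∈ s, (f i).orderTop := by
  classical
  induction s using Finset.cons_induction with
  | empty => simp
  | cons a s ha ih => rw [prod_cons, sum_cons, orderTop_mul, ih]

end HahnSeries

theorem HahnSeries.order_eq_of_orderTop_eq {Γ R : Type*} [Zero Γ] [LinearOrder Γ] [Zero R]
    {x : HahnSeries Γ R} {n : Γ} (h : x.orderTop = n) : x.order = n := by
  have hx : x ≠ 0 := by rintro rfl; simp at h
  exact WithTop.coe_injective ((order_eq_orderTop_of_ne_zero hx).trans h)

theorem IsPrimitiveRoot.zpow_eq_zpow_iff_dvd {K : Type*} [Field K] {ζ : K} {q : ℕ}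
    (hζ : IsPrimitiveRoot ζ q) (hq : q ≠ 0) (x y : ℤ) : ζ ^ x = ζ ^ y ↔ (q : ℤ) ∣ x - y := by
  have hζ0 := hζ.ne_zero hq
  rw [← hζ.zpow_eq_one_iff_dvd, zpow_sub₀ hζ0, div_eq_one_iff_eq (zpow_ne_zero _ hζ0)]

namespace LaurentSeries

variable {K : Type*} [Field K]

theorem coeff_conjRoot_sub_conjRoot (a b : K) (F : LaurentSeries K) (n : ℤ) :
    (conjRoot a F - conjRoot b F).coeff n = (a ^ n - b ^ n) * F.coeff n := by
  rw [HahnSeries.coeff_sub, sub_mul]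
  rfl

theorem coeff_conjRoot_pow_sub_conjRoot_pow_ne_zero_iff {ζ : K} {q : ℕ}
    (hζ : IsPrimitiveRoot ζ q) (hq : q ≠ 0) (F : LaurentSeries K) (a b : ℕ) (n : ℤ) :
    (conjRoot (ζ ^ a) F - conjRoot (ζ ^ b) F).coeff n ≠ 0 ↔
      F.coeff n ≠ 0 ∧ ¬ (q : ℤ) ∣ (a - b) * n := by
  rw [coeff_conjRoot_sub_conjRoot, mul_ne_zero_iff, and_comm, sub_ne_zero, ← zpow_natCast,
    ← zpow_natCast, ← zpow_mul, ← zpow_mul]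
  simp only [ne_eq, hζ.zpow_eq_zpow_iff_dvd hq, sub_mul]

theorem orderTop_conjRoot_pow_sub_conjRoot_pow {ζ : K} {q : ℕ}
    (hζ : IsPrimitiveRoot ζ q) (hq : q ≠ 0) (F : LaurentSeries K) (a b : ℕ) {n₀ : ℤ}
    (h : IsLeast {n | F.coeff n ≠ 0 ∧ ¬ (q : ℤ) ∣ (a - b) * n} n₀) :
    (conjRoot (ζ ^ a) F - conjRoot (ζ ^ b) F).orderTop = n₀ := by
  have hsupp : (conjRoot (ζ ^ a) F - conjRoot (ζ ^ b) F).support =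
      {n | F.coeff n ≠ 0 ∧ ¬ (q : ℤ) ∣ (a - b) * n} :=
    Set.ext fun n => coeff_conjRoot_pow_sub_conjRoot_pow_ne_zero_iff hζ hq F a b n
  exact HahnSeries.orderTop_eq_of_le (hsupp ▸ h.1) (hsupp ▸ h.2)

end LaurentSeries

theorem dvd_gcd_mul_of_dvd_mul_of_dvd_mul {x d : ℤ} {a b : ℕ} (ha : x ∣ a * d) (hb : x ∣ b * d) :
    x ∣ (a.gcd b : ℕ) * d := by
  rw [Nat.gcd_eq_gcd_ab, add_mul, mul_right_comm, mul_right_comm (b : ℤ)]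
  exact dvd_add (ha.mul_right _) (hb.mul_right _)

theorem card_filter_range_dvd_mul_sub {q c : ℕ} (hq : 0 < q) (hc : c ∣ q) (i : ℕ) :
    #{j ∈ range q | (q : ℤ) ∣ c * ((i : ℤ) - (j : ℕ))} = c := by
  obtain ⟨r, rfl⟩ := hc
  have hc0 : c ≠ 0 := by rintro rfl; simp at hq
  have hr : 0 < r := Nat.pos_of_ne_zero (by rintro rfl; simp at hq)
  have hmem : ∀ j : ℕ, (((c * r : ℕ) : ℤ) ∣ c * (i - j)) ↔ j ≡ i [MOD r] := fun j => by
    rw [Nat.cast_mul, mul_dvd_mul_iff_left (by exact_mod_cast hc0), Nat.modEq_iff_dvd]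
  simp_rw [hmem, ← Nat.count_eq_card_filter_range, Nat.count_modEq_card _ hr, Nat.mul_mod_left,
    Nat.mul_div_cancel _ hr]
  simp

/-- For `¬ q ∣ d` this is `β (k + 1)` for the unique `k` with `q ∣ e k * d` and `¬ q ∣ e (k + 1) * d`;
the telescoping form makes sums of it over `d` linear in counts of multiples. -/
def separationExponent (q g : ℕ) (β e : ℕ → ℕ) (d : ℤ) : ℤ :=
  ∑ k ∈ range g, (β (k + 1) : ℤ) *
    ((if (q : ℤ) ∣ e k * d then 1 else 0) - if (q : ℤ) ∣ e (k + 1) * d then 1 else 0)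

theorem separationExponent_of_dvd {q g : ℕ} {β e : ℕ → ℕ} {d : ℤ} (hd : (q : ℤ) ∣ d) :
    separationExponent q g β e d = 0 :=
  sum_eq_zero fun k _ => by simp [Dvd.dvd.mul_left hd]

namespace DualChar

variable {q g : ℕ} {supp : ℤ → Prop} {β e : ℕ → ℕ} (hchar : DualChar q supp g β e)
include hchar

theorem dvd_of_le {k l : ℕ} (hkl : k ≤ l) (hl : l ≤ g) : e l ∣ e k := by
  induction l, hkl using Nat.le_induction with
  | base => exact dvd_rfl
  | succ l _ ih =>
    rw [(hchar.2.2 l (by omega)).2.2.2]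
    exact (Nat.gcd_dvd_left _ _).trans (ih (by omega))

theorem dvd_q {k : ℕ} (hk : k ≤ g) : e k ∣ q :=
  hchar.1 ▸ hchar.dvd_of_le (Nat.zero_le k) hk

theorem dvd_mul_of_le {k l : ℕ} {d : ℤ} (hkl : k ≤ l) (hl : l ≤ g) (h : (q : ℤ) ∣ e l * d) :
    (q : ℤ) ∣ e k * d :=
  h.trans (mul_dvd_mul_right (Int.natCast_dvd_natCast.mpr (hchar.dvd_of_le hkl hl)) d)

theorem exists_level {d : ℤ} (hd : ¬ (q : ℤ) ∣ d) :
    ∃ k < g, (q : ℤ) ∣ e k * d ∧ ¬ (q : ℤ) ∣ e (k + 1) * d := by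
  by_contra! h
  have hall : ∀ k ≤ g, (q : ℤ) ∣ e k * d := by
    intro k hk
    induction k with
    | zero => rw [hchar.1]; exact dvd_mul_right _ _
    | succ k ih => exact h k (by omega) (ih (by omega))
  exact hd (by simpa [hchar.2.1] using hall g le_rfl)

theorem isLeast_of_level {k : ℕ} {d : ℤ} (hk : k < g) (hdvd : (q : ℤ) ∣ e k * d)
    (hndvd : ¬ (q : ℤ) ∣ e (k + 1) * d) :
    IsLeast {n | supp n ∧ ¬ (q : ℤ) ∣ d * n} (-(β (k + 1) : ℤ)) := by
  obtain ⟨hsupp, -, hmin, hgcd⟩ := hchar.2.2 k hk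
  refine ⟨⟨hsupp, fun hβ => hndvd ?_⟩, fun n ⟨hn, hdn⟩ => hmin n hn fun ⟨t, ht⟩ => hdn ?_⟩
  · rw [hgcd]
    exact dvd_gcd_mul_of_dvd_mul_of_dvd_mul hdvd (by simpa [mul_comm] using hβ)
  · rw [ht, mul_left_comm, ← mul_assoc]
    exact hdvd.mul_right t

theorem separationExponent_of_level {k : ℕ} {d : ℤ} (hk : k < g) (hdvd : (q : ℤ) ∣ e k * d)
    (hndvd : ¬ (q : ℤ) ∣ e (k + 1) * d) : separationExponent q g β e d = β (k + 1) := by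
  have hstep : ∀ l ∈ range g, ((if (q : ℤ) ∣ e l * d then 1 else 0) -
      if (q : ℤ) ∣ e (l + 1) * d then 1 else 0 : ℤ) = if l = k then 1 else 0 := by
    intro l hl
    have hl := mem_range.mp hl
    rcases lt_trichotomy l k with hlk | rfl | hkl
    · rw [if_pos (hchar.dvd_mul_of_le hlk.le hk.le hdvd),
        if_pos (hchar.dvd_mul_of_le hlk hk.le hdvd), if_neg hlk.ne]; rfl
    · rw [if_pos hdvd, if_neg hndvd, if_pos rfl]; rfl
    · rw [if_neg fun h => hndvd (hchar.dvd_mul_of_le hkl hl.le h),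
        if_neg fun h => hndvd (hchar.dvd_mul_of_le (by omega) hl h), if_neg hkl.ne']; rfl
  rw [separationExponent, sum_congr rfl fun l hl => by rw [hstep l hl]]
  simp [hk]

theorem isLeast_neg_separationExponent {d : ℤ} (hd : ¬ (q : ℤ) ∣ d) :
    IsLeast {n | supp n ∧ ¬ (q : ℤ) ∣ d * n} (-separationExponent q g β e d) := by
  obtain ⟨k, hk, hdvd, hndvd⟩ := hchar.exists_level hd
  rw [hchar.separationExponent_of_level hk hdvd hndvd]
  exact hchar.isLeast_of_level hk hdvd hndvd

theorem sum_sum_separationExponent (hq : 0 < q) :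
    ∑ i ∈ range q, ∑ j ∈ range q, separationExponent q g β e (i - j) =
      q * ∑ k ∈ range g, ((e k - e (k + 1) : ℕ) : ℤ) * β (k + 1) := by
  have hcount : ∀ k ≤ g, ∑ i ∈ range q, ∑ j ∈ range q,
      (if (q : ℤ) ∣ e k * ((i : ℤ) - j) then 1 else 0 : ℤ) = q * e k := fun k hk => by
    simp only [sum_boole, card_filter_range_dvd_mul_sub hq (hchar.dvd_q hk), sum_const,
      card_range, nsmul_eq_mul]
  have hterm : ∀ k ∈ range g, ∑ i ∈ range q, ∑ j ∈ range q, (β (k + 1) : ℤ) *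
      ((if (q : ℤ) ∣ e k * ((i : ℤ) - j) then 1 else 0) -
        if (q : ℤ) ∣ e (k + 1) * ((i : ℤ) - j) then 1 else 0) =
      q * (((e k - e (k + 1) : ℕ) : ℤ) * β (k + 1)) := fun k hk => by
    have hk := mem_range.mp hk
    have hle : e (k + 1) ≤ e k :=
      Nat.le_of_dvd (Nat.pos_of_dvd_of_pos (hchar.dvd_q hk.le) hq) (hchar.dvd_of_le k.le_succ hk)
    simp only [← mul_sum, sum_sub_distrib, hcount k hk.le, hcount (k + 1) hk, Nat.cast_sub hle]
    ring
  unfold separationExponent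
  rw [sum_congr rfl fun i _ => sum_comm, sum_comm, mul_sum]
  exact sum_congr rfl hterm

end DualChar

theorem irregularity_End_eq_sum_general {K : Type*} [Field K]
    (q : ℕ) (hq : 0 < q)
    (ζ : K) (hζ : IsPrimitiveRoot ζ q)
    (F : LaurentSeries K)
    (g : ℕ) (β e : ℕ → ℕ)
    (hchar : DualChar q (fun n => F.coeff n ≠ 0) g β e) :
    (q : ℤ) * (∑ i ∈ Finset.range g, ((e i - e (i + 1) : ℕ) : ℤ) * (β (i + 1) : ℤ)) =
      - (∏ i ∈ Finset.range q, ∏ j ∈ (Finset.range q).erase i,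
        (LaurentSeries.conjRoot (ζ ^ (i + 1)) F -
          LaurentSeries.conjRoot (ζ ^ (j + 1)) F)).order := by
  have hpair : ∀ i ∈ range q, ∀ j ∈ (range q).erase i,
      (LaurentSeries.conjRoot (ζ ^ (i + 1)) F - LaurentSeries.conjRoot (ζ ^ (j + 1)) F).orderTop =
        ↑(-separationExponent q g β e (i - j)) := by
    intro i hi j hj
    have hij : ¬ (q : ℤ) ∣ (i : ℤ) - j := fun h =>
      (ne_of_mem_erase hj) ((Nat.modEq_iff_dvd.mpr h).eq_of_lt_of_lt
        (mem_range.mp (mem_of_mem_erase hj)) (mem_range.mp hi))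
    apply LaurentSeries.orderTop_conjRoot_pow_sub_conjRoot_pow hζ hq.ne'
    simpa using hchar.isLeast_neg_separationExponent hij
  have hprod : (∏ i ∈ range q, ∏ j ∈ (range q).erase i,
      (LaurentSeries.conjRoot (ζ ^ (i + 1)) F -
        LaurentSeries.conjRoot (ζ ^ (j + 1)) F)).orderTop =
      ↑(-∑ i ∈ range q, ∑ j ∈ range q, separationExponent q g β e (i - j)) := by
    rw [HahnSeries.orderTop_prod, sum_congr rfl fun i hi =>
      (HahnSeries.orderTop_prod _ _).trans (sum_congr rfl (hpair i hi))]
    simp only [← WithTop.coe_sum, ← sum_neg_distrib, WithTop.coe_inj]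
    refine sum_congr rfl fun i _ => sum_erase _ ?_
    rw [sub_self, separationExponent_of_dvd (dvd_zero _), neg_zero]
  rw [HahnSeries.order_eq_of_orderTop_eq hprod, neg_neg, hchar.sum_sum_separationExponent hq]

/-- Let `E_{f,q}` be an irreducible connection with dual Puiseux
characteristic `(q, p; β 1, …, β g)` and gcd sequence `e 0 = q`,
`e k = gcd (e (k-1)) (β k)`.  Then
`Irr(End(E_{f,q})) = ∑_{i=1}^{g} (e (i-1) - e i) · β i`, where
`Irr(End(E_{f,q})) = -ord_x ∏_{i≠j} (f_i - f_j)` and `F` is the expansion of `f` in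
`t = x^{1/q}`. -/
theorem irregularity_End_eq_sum {K : Type*} [Field K] [CharZero K] [IsAlgClosed K]
    (q p : ℕ) (hq : 0 < q) (hp : 0 < p)
    (ζ : K) (hζ : IsPrimitiveRoot ζ q)
    (F : LaurentSeries K)
    (hFlow : ∀ n : ℤ, n < -(p : ℤ) → F.coeff n = 0)
    (hFlead : F.coeff (-(p : ℤ)) ≠ 0)
    (hFirr : RamIrred q q F)
    (g : ℕ) (β e : ℕ → ℕ)
    (hchar : DualChar q (fun n => F.coeff n ≠ 0) g β e) :
    (q : ℤ) * (∑ i ∈ Finset.range g, ((e i - e (i + 1) : ℕ) : ℤ) * (β (i + 1) : ℤ)) =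
      - (∏ i ∈ Finset.range q, ∏ j ∈ (Finset.range q).erase i,
        (LaurentSeries.conjRoot (ζ ^ (i + 1)) F -
          LaurentSeries.conjRoot (ζ ^ (j + 1)) F)).order :=
  irregularity_End_eq_sum_general q hq ζ hζ F g β e hchar
end

section
/- Suppose an irreducible E_{f,q} has dual Puiseux characteristic (q, p; β₁, …, β_g) with p < q (hence p = β₁). Then the local Fourier transform F^{(∞,0)}(E_{f,q}) ≅ E_{g,q-p} has dual Puiseux characteristic (q-p, β₁; β₂, …, β_g) if (q-p) | β₁, and (q-p, β₁; β₁, β₂, …, β_g) otherwise. -/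
open PowerSeries

namespace PowerSeries

variable {R : Type*} [CommRing R]

theorem coeff_add_mul_of_le_order {A B : R⟦X⟧} {m l : ℕ} (hA : m ≤ A.order) (hB : l ≤ B.order) :
    coeff (m + l) (A * B) = coeff m A * coeff l B := by
  obtain ⟨A, rfl⟩ := X_pow_dvd_iff.mpr fun i hi =>
    coeff_of_lt_order i ((ENat.natCast_lt_natCast.mpr hi).trans_le hA)
  obtain ⟨B, rfl⟩ := X_pow_dvd_iff.mpr fun i hi =>
    coeff_of_lt_order i ((ENat.natCast_lt_natCast.mpr hi).trans_le hB)
  rw [show X ^ m * A * (X ^ l * B) = X ^ (m + l) * (A * B) by ring]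
  simp [coeff_X_pow_mul', coeff_zero_eq_constantCoeff]

theorem coeff_pow_self_of_constantCoeff_eq_zero {A : R⟦X⟧} (hA : constantCoeff A = 0) (k : ℕ) :
    coeff k (A ^ k) = coeff 1 A ^ k := by
  induction k with
  | zero => simp
  | succ k ih =>
    rw [pow_succ, coeff_add_mul_of_le_order (le_order_pow_of_constantCoeff_eq_zero k hA)
      (by simpa using one_le_order_iff_constCoeff_eq_zero.mpr hA), ih, pow_succ]

theorem le_order_pow_sub_one_and_coeff {U : R⟦X⟧} (hU : constantCoeff U = 1) {r : ℕ}
    (hr : r ≤ (U - 1).order) (k : ℕ) :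
    r ≤ (U ^ k - 1).order ∧ coeff r (U ^ k - 1) = (k : R) * coeff r (U - 1) := by
  have hgeom : U ^ k - 1 = (U - 1) * ∑ i ∈ Finset.range k, U ^ i := (mul_geom_sum U k).symm
  have hsum : coeff 0 (∑ i ∈ Finset.range k, U ^ i) = k := by simp [hU]
  constructor
  · rw [hgeom]
    exact hr.trans (le_self_add.trans (le_order_mul _ _))
  · have h := coeff_add_mul_of_le_order (B := ∑ i ∈ Finset.range k, U ^ i) (l := 0) hr (by simp)
    rw [add_zero, hsum] at h
    rw [hgeom, h, mul_comm]
theorem min_order_le_order_sub {R : Type*} [Ring R] (φ ψ : R⟦X⟧) :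
    min φ.order ψ.order ≤ (φ - ψ).order := by
  simpa only [sub_eq_add_neg, order_neg] using min_order_le_order_add φ (-ψ)

theorem order_eq_add_of_coeff_add [IsDomain R] {V W : R⟦X⟧} {p : ℕ} {c : R} (hc : c ≠ 0)
    (h : ∀ r : ℕ, r ≤ V.order → (p + r : ℕ) ≤ W.order ∧ coeff (p + r) W = c * coeff r V) :
    W.order = p + V.order := by
  by_cases hV : V = 0
  · rw [hV, order_zero, add_top, ENat.eq_top_iff_forall_ge]
    exact fun n => (Nat.cast_le.mpr (Nat.le_add_left n p)).trans (h n (by simp [hV])).1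
  · obtain ⟨r, hr⟩ := ENat.ne_top_iff_exists.mp (order_eq_top.not.mpr hV)
    obtain ⟨hle, hcoeff⟩ := h r hr.le
    rw [← hr, ← Nat.cast_add]
    refine le_antisymm (order_le _ ?_) hle
    rw [hcoeff]
    exact mul_ne_zero hc (order_eq_nat.mp hr.symm).1

/-- The substitution `Y ∘ S`, meaningful only when `constantCoeff S = 0`. -/
noncomputable def comp (Y S : R⟦X⟧) : R⟦X⟧ :=
  mk fun n => ∑ k ∈ Finset.range (n + 1), coeff k Y * coeff n (S ^ k)

theorem coeff_comp (Y S : R⟦X⟧) (n : ℕ) :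
    coeff n (Y.comp S) = ∑ k ∈ Finset.range (n + 1), coeff k Y * coeff n (S ^ k) :=
  coeff_mk _ _

theorem sub_comp (Y Y' S : R⟦X⟧) : (Y - Y').comp S = Y.comp S - Y'.comp S := by
  ext n
  simp only [coeff_comp, map_sub, sub_mul, Finset.sum_sub_distrib]

theorem comp_rescale (Y S : R⟦X⟧) (c : R) : Y.comp (rescale c S) = rescale c (Y.comp S) := by
  ext n
  simp only [coeff_comp, coeff_rescale, ← map_pow, Finset.mul_sum]
  exact Finset.sum_congr rfl fun k _ => mul_left_comm _ _ _

theorem comp_C_mul (Y S : R⟦X⟧) (c : R) : Y.comp (C c * S) = (rescale c Y).comp S := by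
  ext n
  simp only [coeff_comp, coeff_rescale, mul_pow, ← map_pow, coeff_C_mul]
  exact Finset.sum_congr rfl fun k _ => by ring

theorem le_order_comp (Y S : R⟦X⟧) : Y.order ≤ (Y.comp S).order := by
  refine le_order _ _ fun n hn => ?_
  rw [coeff_comp]
  refine Finset.sum_eq_zero fun k hk => ?_
  rw [coeff_of_lt_order k ((Nat.cast_le.mpr (Finset.mem_range_succ_iff.mp hk)).trans_lt hn),
    zero_mul]

theorem coeff_comp_of_le_order {S Y : R⟦X⟧} (hS : constantCoeff S = 0) {n : ℕ}
    (hn : n ≤ Y.order) : coeff n (Y.comp S) = coeff n Y * coeff 1 S ^ n := by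
  rw [coeff_comp, Finset.sum_eq_single_of_mem n (Finset.self_mem_range_succ n),
    coeff_pow_self_of_constantCoeff_eq_zero hS]
  intro k hk hkn
  rw [coeff_of_lt_order k ((Nat.cast_lt.mpr
    ((Finset.mem_range_succ_iff.mp hk).lt_of_ne hkn)).trans_le hn), zero_mul]

theorem order_comp [IsDomain R] {S : R⟦X⟧} (hS0 : constantCoeff S = 0) (hS1 : coeff 1 S ≠ 0)
    (Y : R⟦X⟧) : (Y.comp S).order = Y.order := by
  refine le_antisymm ?_ (le_order_comp Y S)
  by_cases hY : Y = 0
  · simp [hY]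
  obtain ⟨n, hn⟩ := ENat.ne_top_iff_exists.mp (order_eq_top.not.mpr hY)
  rw [← hn]
  refine order_le n ?_
  rw [coeff_comp_of_le_order hS0 hn.le]
  exact mul_ne_zero (order_eq_nat.mp hn.symm).1 (pow_ne_zero n hS1)

theorem le_order_pow_mul_pow_sub_one_and_coeff {A U : R⟦X⟧} (hA : constantCoeff A = 0)
    (hU : constantCoeff U = 1) {r : ℕ} (hr : r ≤ (U - 1).order) (k : ℕ) :
    (k + r : ℕ) ≤ (A ^ k * (U ^ k - 1)).order ∧
      coeff (k + r) (A ^ k * (U ^ k - 1)) = k * coeff 1 A ^ k * coeff r (U - 1) := by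
  obtain ⟨hr', hcoeff⟩ := le_order_pow_sub_one_and_coeff hU hr k
  have hk := le_order_pow_of_constantCoeff_eq_zero k hA
  refine ⟨?_, ?_⟩
  · rw [Nat.cast_add]
    exact (add_le_add hk hr').trans (le_order_mul _ _)
  · rw [coeff_add_mul_of_le_order hk hr', coeff_pow_self_of_constantCoeff_eq_zero hA, hcoeff]
    ring

theorem le_order_comp_mul_sub_comp_and_coeff {A U Y : R⟦X⟧} (hA : constantCoeff A = 0)
    (hU : constantCoeff U = 1) {p r : ℕ} (hp : p ≤ Y.order) (hr : r ≤ (U - 1).order) :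
    (p + r : ℕ) ≤ (Y.comp (A * U) - Y.comp A).order ∧
      coeff (p + r) (Y.comp (A * U) - Y.comp A) =
        p * coeff p Y * coeff 1 A ^ p * coeff r (U - 1) := by
  have hsum : ∀ n, coeff n (Y.comp (A * U) - Y.comp A) =
      ∑ k ∈ Finset.range (n + 1), coeff k Y * coeff n (A ^ k * (U ^ k - 1)) := fun n => by
    simp only [map_sub, coeff_comp, ← Finset.sum_sub_distrib, ← mul_sub, mul_pow, mul_sub_one]
  have hterm : ∀ n k, n ≤ p + r → k ≠ p ∨ n ≠ p + r →
      coeff k Y * coeff n (A ^ k * (U ^ k - 1)) = 0 := by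
    intro n k hn hkn
    rcases lt_or_ge k p with hkp | hkp
    · rw [coeff_of_lt_order k ((Nat.cast_lt.mpr hkp).trans_le hp), zero_mul]
    · rw [coeff_of_lt_order n ((Nat.cast_lt.mpr (by omega)).trans_le
        (le_order_pow_mul_pow_sub_one_and_coeff hA hU hr k).1), mul_zero]
  refine ⟨le_order _ _ fun n hn => ?_, ?_⟩
  · have hn : n < p + r := by exact_mod_cast hn
    rw [hsum]
    exact Finset.sum_eq_zero fun k _ => hterm n k hn.le (Or.inr hn.ne)
  · rw [hsum, Finset.sum_eq_single_of_mem p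
      (Finset.mem_range_succ_iff.mpr (Nat.le_add_right p r))
      fun k _ hk => hterm _ k le_rfl (Or.inl hk),
      (le_order_pow_mul_pow_sub_one_and_coeff hA hU hr p).2]
    ring

end PowerSeries

theorem PowerSeries.exists_rescale_eq_C_mul_mul {K : Type*} [Field K] {S : K⟦X⟧}
    (hS0 : constantCoeff S = 0) (hS1 : coeff 1 S ≠ 0) (c : K) :
    ∃ U : K⟦X⟧, constantCoeff U = 1 ∧ rescale c S = C c * S * U := by
  obtain ⟨T, rfl⟩ := X_dvd_iff.mpr hS0
  have hT : constantCoeff T ≠ 0 := by simpa using hS1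
  refine ⟨rescale c T * T⁻¹, ?_, ?_⟩
  · rw [map_mul, ← coeff_zero_eq_constantCoeff_apply, coeff_rescale, pow_zero, one_mul,
      coeff_zero_eq_constantCoeff_apply, constantCoeff_inv, mul_inv_cancel₀ hT]
  · rw [map_mul, rescale_X, show C c * (X * T) * (rescale c T * T⁻¹) =
      C c * X * rescale c T * (T * T⁻¹) by ring, PowerSeries.mul_inv_cancel T hT, mul_one]

/-- The relations, in the variable `t = x^{1/q}`, between `Yf = 1/f`, `Yg = 1/g` and the change
of parameter `s = S(t)` along `F^{(∞,0)}`. -/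
structure IsFourierPair {K : Type*} [Field K] (p q : ℕ) (S Yf Yg : K⟦X⟧) : Prop where
  lt : p < q
  constantCoeff_eq_zero : constantCoeff S = 0
  coeff_one_ne_zero : coeff 1 S ≠ 0
  mul_pow_eq : Yf * S ^ (q - p) = X ^ q
  comp_eq : Yg.comp S = -Yf

namespace IsFourierPair

variable {K : Type*} [Field K] {p q : ℕ} {S Yf Yg : K⟦X⟧}

theorem order_left (h : IsFourierPair p q S Yf Yg) : Yf.order = p := by
  have hS : S.order = 1 := order_eq_nat.mpr
    ⟨h.coeff_one_ne_zero, fun i hi => by simpa [Nat.lt_one_iff.mp hi] using h.constantCoeff_eq_zero⟩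
  have hYf : Yf ≠ 0 := by
    rintro rfl
    simpa using congrArg (coeff q) h.mul_pow_eq
  obtain ⟨n, hn⟩ := ENat.ne_top_iff_exists.mp (order_eq_top.not.mpr hYf)
  have key := congrArg order h.mul_pow_eq
  rw [order_mul, order_pow, hS, order_X_pow, ← hn, nsmul_one, ← Nat.cast_add,
    Nat.cast_inj] at key
  rw [← hn, Nat.cast_inj]
  have := h.lt
  omega

theorem order_right (h : IsFourierPair p q S Yf Yg) : Yg.order = p := by
  rw [← order_comp h.constantCoeff_eq_zero h.coeff_one_ne_zero, h.comp_eq, order_neg,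
    h.order_left]

theorem pow_mul_rescale_left_eq (h : IsFourierPair p q S Yf Yg) {η : K} (hη0 : η ≠ 0)
    (hη : η ^ p = 1) {U : K⟦X⟧} (hU : rescale η S = C η * S * U) :
    U ^ (q - p) * rescale η Yf = Yf := by
  have hS : S ≠ 0 := fun h0 => h.coeff_one_ne_zero (by simp [h0])
  have hηq : η ^ q = η ^ (q - p) := by
    rw [← Nat.sub_add_cancel h.lt.le, pow_add, hη, mul_one, Nat.add_sub_cancel]
  have hrescale := congrArg (rescale η) h.mul_pow_eq
  rw [map_mul, map_pow, hU, map_pow, rescale_X] at hrescale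
  have hC : C (η ^ (q - p)) ≠ 0 := (map_ne_zero_iff _ C_injective).mpr (pow_ne_zero _ hη0)
  refine mul_left_cancel₀ (mul_ne_zero hC (pow_ne_zero (q - p) hS)) ?_
  calc C (η ^ (q - p)) * S ^ (q - p) * (U ^ (q - p) * rescale η Yf)
      = rescale η Yf * (C η * S * U) ^ (q - p) := by rw [mul_pow, mul_pow, map_pow]; ring
    _ = C (η ^ q) * X ^ q := by rw [hrescale, mul_pow, map_pow]
    _ = C (η ^ (q - p)) * S ^ (q - p) * Yf := by rw [hηq, ← h.mul_pow_eq]; ring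

theorem le_order_sub_rescale_left_and_coeff (h : IsFourierPair p q S Yf Yg) {η : K}
    (hη0 : η ≠ 0) (hη : η ^ p = 1) {U : K⟦X⟧} (hU1 : constantCoeff U = 1)
    (hU : rescale η S = C η * S * U) {r : ℕ} (hr : r ≤ (U - 1).order) :
    (p + r : ℕ) ≤ (Yf - rescale η Yf).order ∧
      coeff (p + r) (Yf - rescale η Yf) = ((q - p : ℕ) * coeff p Yf) * coeff r (U - 1) := by
  have hσ : p ≤ (rescale η Yf).order := le_order _ _ fun i hi => by
    rw [coeff_rescale, coeff_of_lt_order i (hi.trans_le h.order_left.ge), mul_zero]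
  obtain ⟨hle, hcoeff⟩ := le_order_pow_sub_one_and_coeff hU1 hr (q - p)
  have hfactor : Yf - rescale η Yf = (U ^ (q - p) - 1) * rescale η Yf := by
    rw [sub_one_mul, h.pow_mul_rescale_left_eq hη0 hη hU]
  rw [hfactor, add_comm p]
  refine ⟨?_, ?_⟩
  · rw [Nat.cast_add]
    exact (add_le_add hle hσ).trans (le_order_mul _ _)
  · rw [coeff_add_mul_of_le_order hle hσ, hcoeff, coeff_rescale, hη, one_mul]
    ring

theorem le_order_sub_rescale_right_comp_and_coeff (h : IsFourierPair p q S Yf Yg) {η : K}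
    (hη0 : η ≠ 0) (hη : η ^ p = 1) {U : K⟦X⟧} (hU1 : constantCoeff U = 1)
    (hU : rescale η S = C η * S * U) {r : ℕ} (hr : r ≤ (U - 1).order) :
    (p + r : ℕ) ≤ ((Yg - rescale η Yg).comp S).order ∧
      coeff (p + r) ((Yg - rescale η Yg).comp S) = -(q * coeff p Yf) * coeff r (U - 1) := by
  have hS0 := h.constantCoeff_eq_zero
  have hcomp : (Yg - rescale η Yg).comp S =
      (Yg.comp (C η * S * U) - Yg.comp (C η * S)) - (Yf - rescale η Yf) := by
    rw [sub_comp, ← comp_C_mul, ← hU, comp_rescale, h.comp_eq, map_neg]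
    ring
  have hYg : coeff p Yg * coeff 1 S ^ p = -coeff p Yf := by
    rw [← coeff_comp_of_le_order hS0 h.order_right.ge, h.comp_eq, map_neg]
  obtain ⟨hB, hBcoeff⟩ := le_order_comp_mul_sub_comp_and_coeff (A := C η * S)
    (by simp [hS0]) hU1 h.order_right.ge hr
  obtain ⟨hW, hWcoeff⟩ := h.le_order_sub_rescale_left_and_coeff hη0 hη hU1 hU hr
  rw [hcomp]
  refine ⟨(le_min hB hW).trans (min_order_le_order_sub _ _), ?_⟩
  rw [map_sub, hBcoeff, hWcoeff, coeff_C_mul, mul_pow, hη, one_mul, Nat.cast_sub h.lt.le]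
  linear_combination ((p : K) * coeff r (U - 1)) * hYg

theorem order_sub_rescale_right [CharZero K] (h : IsFourierPair p q S Yf Yg) {η : K}
    (hη0 : η ≠ 0) (hη : η ^ p = 1) :
    (Yg - rescale η Yg).order = (Yf - rescale η Yf).order := by
  obtain ⟨U, hU1, hU⟩ :=
    exists_rescale_eq_C_mul_mul h.constantCoeff_eq_zero h.coeff_one_ne_zero η
  have hYf : coeff p Yf ≠ 0 := (order_eq_nat.mp h.order_left).1
  have hq : (q : K) ≠ 0 := Nat.cast_ne_zero.mpr (Nat.zero_lt_of_lt h.lt).ne'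
  have hqp : ((q - p : ℕ) : K) ≠ 0 := Nat.cast_ne_zero.mpr (Nat.sub_pos_of_lt h.lt).ne'
  rw [← order_comp h.constantCoeff_eq_zero h.coeff_one_ne_zero,
    order_eq_add_of_coeff_add (neg_ne_zero.mpr (mul_ne_zero hq hYf))
      fun r hr => h.le_order_sub_rescale_right_comp_and_coeff hη0 hη hU1 hU hr,
    order_eq_add_of_coeff_add (mul_ne_zero hqp hYf)
      fun r hr => h.le_order_sub_rescale_left_and_coeff hη0 hη hU1 hU hr]

end IsFourierPair

theorem HahnSeries.isLeast_support_iff {Γ R : Type*} [Zero Γ] [LinearOrder Γ] [Zero R]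
    {x : HahnSeries Γ R} {m : Γ} : IsLeast x.support m ↔ x ≠ 0 ∧ x.order = m := by
  refine ⟨fun hm => ?_, ?_⟩
  · have hx : x ≠ 0 := ne_zero_of_coeff_ne_zero hm.1
    refine ⟨hx, le_antisymm (order_le_of_coeff_ne_zero hm.1) (hm.2 ?_)⟩
    exact (mem_support _ _).mpr (mt coeff_order_eq_zero.mp hx)
  · rintro ⟨hx, rfl⟩
    exact ⟨(mem_support _ _).mpr (mt coeff_order_eq_zero.mp hx),
      fun i hi => order_le_of_coeff_ne_zero ((mem_support _ _).mp hi)⟩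

theorem HahnSeries.order_ofPowerSeries {R : Type*} [Semiring R] (Y : R⟦X⟧) :
    (ofPowerSeries ℤ R Y).order = Y.order.toNat := by
  by_cases hY : Y = 0
  · simp [hY]
  refine (isLeast_support_iff.mp ⟨?_, fun i hi => ?_⟩).2
  · simpa [PowerSeries.coeff_coe] using coeff_order hY
  · have hi : (ofPowerSeries ℤ R Y).coeff i ≠ 0 := (mem_support _ _).mp hi
    rw [PowerSeries.coeff_coe] at hi
    split_ifs at hi with hneg
    · exact absurd rfl hi
    obtain ⟨k, rfl⟩ := Int.eq_ofNat_of_zero_le (not_lt.mp hneg)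
    exact_mod_cast ENat.toNat_le_of_le_natCast (order_le k (by simpa using hi))

namespace LaurentSeries

variable {K : Type*} [Field K]

@[simp]
theorem coeff_conjRoot (c : K) (F : LaurentSeries K) (n : ℤ) :
    (conjRoot c F).coeff n = c ^ n * F.coeff n := rfl

theorem support_conjRoot {c : K} (hc : c ≠ 0) (F : LaurentSeries K) :
    (conjRoot c F).support = F.support := by
  ext n
  simp [zpow_ne_zero n hc]

theorem conjRoot_one (c : K) : conjRoot c (1 : LaurentSeries K) = 1 := by
  ext n
  by_cases hn : n = 0 <;> simp [HahnSeries.coeff_one, hn]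

theorem conjRoot_mul {c : K} (hc : c ≠ 0) (A B : LaurentSeries K) :
    conjRoot c (A * B) = conjRoot c A * conjRoot c B := by
  ext n
  rw [coeff_conjRoot, HahnSeries.coeff_mul, HahnSeries.coeff_mul, Finset.mul_sum]
  simp only [support_conjRoot hc]
  refine Finset.sum_congr rfl fun ij hij => ?_
  rw [← (Finset.mem_antidiagonal.mp hij).2.2, coeff_conjRoot, coeff_conjRoot, zpow_add₀ hc]
  ring

theorem conjRoot_ofPowerSeries (c : K) (Y : K⟦X⟧) :
    conjRoot c (HahnSeries.ofPowerSeries ℤ K Y) = HahnSeries.ofPowerSeries ℤ K (rescale c Y) := by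
  ext n
  rw [coeff_conjRoot, PowerSeries.coeff_coe, PowerSeries.coeff_coe]
  split_ifs with hn
  · rw [mul_zero]
  · obtain ⟨k, rfl⟩ := Int.eq_ofNat_of_zero_le (not_lt.mp hn)
    simp

theorem conjRoot_sub_self_eq_mul {c : K} (hc : c ≠ 0) {F : LaurentSeries K} {Y : K⟦X⟧}
    (hFY : HahnSeries.ofPowerSeries ℤ K Y * F = 1) :
    conjRoot c F - F = F * conjRoot c F * HahnSeries.ofPowerSeries ℤ K (Y - rescale c Y) := by
  have hσ : HahnSeries.ofPowerSeries ℤ K (rescale c Y) * conjRoot c F = 1 := by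
    rw [← conjRoot_ofPowerSeries, ← conjRoot_mul hc, hFY, conjRoot_one]
  rw [map_sub]
  linear_combination (-(conjRoot c F)) * hFY + F * hσ

theorem order_conjRoot {c : K} (hc : c ≠ 0) (F : LaurentSeries K) :
    (conjRoot c F).order = F.order := by
  by_cases hF : F = 0
  · have h0 : conjRoot c F = 0 := by ext n; simp [hF]
    rw [h0, hF]
  · refine (HahnSeries.isLeast_support_iff.mp ?_).2
    rw [support_conjRoot hc]
    exact HahnSeries.isLeast_support_iff.mpr ⟨hF, rfl⟩

theorem support_conjRoot_sub_self {η : K} {D : ℕ} (hη : IsPrimitiveRoot η D)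
    (F : LaurentSeries K) :
    (conjRoot η F - F).support = {i | F.coeff i ≠ 0 ∧ ¬ (D : ℤ) ∣ i} := by
  ext i
  simp [← sub_one_mul, sub_eq_zero, hη.zpow_eq_one_iff_dvd, and_comm]

theorem order_eq_neg_of_ofPowerSeries_mul_eq_one {F : LaurentSeries K} {Y : K⟦X⟧}
    (hFY : HahnSeries.ofPowerSeries ℤ K Y * F = 1) : F.order = -(Y.order.toNat : ℤ) := by
  have h := congrArg HahnSeries.order hFY
  rw [HahnSeries.order_mul (left_ne_zero_of_mul_eq_one hFY) (right_ne_zero_of_mul_eq_one hFY),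
    HahnSeries.order_one, HahnSeries.order_ofPowerSeries] at h
  omega

theorem isLeast_support_conjRoot_sub_self_iff {c : K} (hc : c ≠ 0) {F : LaurentSeries K}
    {Y : K⟦X⟧} (hFY : HahnSeries.ofPowerSeries ℤ K Y * F = 1) {m : ℤ} :
    IsLeast (conjRoot c F - F).support m ↔ (Y - rescale c Y).order ≠ ⊤ ∧
      m = ((Y - rescale c Y).order.toNat : ℤ) - 2 * Y.order.toNat := by
  have hF : F ≠ 0 := right_ne_zero_of_mul_eq_one hFY
  have hσF : conjRoot c F ≠ 0 := HahnSeries.support_nonempty_iff.mp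
    (support_conjRoot hc F ▸ HahnSeries.support_nonempty_iff.mpr hF)
  rw [HahnSeries.isLeast_support_iff, conjRoot_sub_self_eq_mul hc hFY]
  simp only [ne_eq, PowerSeries.order_eq_top, mul_eq_zero, hF, hσF, false_or,
    map_eq_zero_iff _ HahnSeries.ofPowerSeries_injective]
  refine and_congr_right fun hW => ?_
  rw [HahnSeries.order_mul (mul_ne_zero hF hσF)
      ((map_ne_zero_iff _ HahnSeries.ofPowerSeries_injective).mpr hW),
    HahnSeries.order_mul hF hσF, order_conjRoot hc, order_eq_neg_of_ofPowerSeries_mul_eq_one hFY,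
    HahnSeries.order_ofPowerSeries]
  omega

theorem isLeast_support_of_ofPowerSeries_mul_eq_one {F : LaurentSeries K} {Y : K⟦X⟧} {p : ℕ}
    (hY : Y.order = p) (hFY : HahnSeries.ofPowerSeries ℤ K Y * F = 1) :
    IsLeast F.support (-(p : ℤ)) :=
  HahnSeries.isLeast_support_iff.mpr ⟨right_ne_zero_of_mul_eq_one hFY, by
    rw [order_eq_neg_of_ofPowerSeries_mul_eq_one hFY, hY, ENat.toNat_natCast]⟩

end LaurentSeries

theorem IsFourierPair.isLeast_nonDvd_iff {K : Type*} [Field K] [CharZero K] [IsAlgClosed K]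
    {p q : ℕ} {S Yf Yg : K⟦X⟧} (h : IsFourierPair p q S Yf Yg) {F G : LaurentSeries K}
    (hF : HahnSeries.ofPowerSeries ℤ K Yf * F = 1) (hG : HahnSeries.ofPowerSeries ℤ K Yg * G = 1)
    {D : ℕ} (hD : D ∣ p) (hD0 : D ≠ 0) (m : ℤ) :
    IsLeast {i | F.coeff i ≠ 0 ∧ ¬ (D : ℤ) ∣ i} m ↔
      IsLeast {i | G.coeff i ≠ 0 ∧ ¬ (D : ℤ) ∣ i} m := by
  have : NeZero (D : K) := ⟨Nat.cast_ne_zero.mpr hD0⟩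
  obtain ⟨η, hη⟩ := HasEnoughRootsOfUnity.exists_primitiveRoot K D
  have hη0 : η ≠ 0 := hη.ne_zero hD0
  rw [← LaurentSeries.support_conjRoot_sub_self hη, ← LaurentSeries.support_conjRoot_sub_self hη,
    LaurentSeries.isLeast_support_conjRoot_sub_self_iff hη0 hF,
    LaurentSeries.isLeast_support_conjRoot_sub_self_iff hη0 hG, h.order_left, h.order_right,
    h.order_sub_rescale_right hη0 ((hη.pow_eq_one_iff_dvd p).mpr hD)]

theorem Composed.comp_eq {K : Type*} [Field K] {S Y Z : K⟦X⟧} (h : Composed S Y Z) :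
    Y.comp S = Z :=
  ext fun n => (coeff_comp Y S n).trans (h n).symm

theorem mul_pow_eq_X_pow_of_ofPowerSeries {K : Type*} [Field K] {F : LaurentSeries K}
    {Y S : K⟦X⟧} {n q : ℕ} (hYF : HahnSeries.ofPowerSeries ℤ K Y * F = 1)
    (hS : HahnSeries.ofPowerSeries ℤ K S ^ n = HahnSeries.single (q : ℤ) 1 * F) :
    Y * S ^ n = X ^ q := by
  apply HahnSeries.ofPowerSeries_injective (Γ := ℤ)
  rw [map_mul, map_pow, hS, HahnSeries.ofPowerSeries_X_pow, mul_left_comm, hYF, mul_one]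

theorem dualChar_iff {q : ℕ} {supp : ℤ → Prop} {g : ℕ} {β e : ℕ → ℕ} :
    DualChar q supp g β e ↔ e 0 = q ∧ e g = 1 ∧ ∀ k < g,
      IsLeast {i | supp i ∧ ¬ (e k : ℤ) ∣ i} (-(β (k + 1) : ℤ)) ∧
        e (k + 1) = Nat.gcd (e k) (β (k + 1)) := by
  simp [DualChar, IsLeast, lowerBounds, and_assoc]

namespace DualChar

variable {q : ℕ} {supp : ℤ → Prop} {g : ℕ} {β e : ℕ → ℕ}

theorem e_one_eq (h : DualChar q supp g β e) (hg : 0 < g) : e 1 = Nat.gcd q (β 1) := by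
  rw [(h.2.2 0 hg).2.2.2, h.1]

theorem dvd_beta_one (h : DualChar q supp g β e) {k : ℕ} (hk : 1 ≤ k) (hkg : k ≤ g) :
    e k ∣ β 1 := by
  induction k, hk using Nat.le_induction with
  | base => exact (h.e_one_eq hkg).symm ▸ Nat.gcd_dvd_right _ _
  | succ k hk ih =>
    rw [(h.2.2 k (by omega)).2.2.2]
    exact (Nat.gcd_dvd_left _ _).trans (ih (by omega))

theorem beta_one_eq (h : DualChar q supp g β e) (hg : 0 < g) {p : ℕ}
    (hp : IsLeast {i | supp i} (-(p : ℤ))) (hqp : ¬ (q : ℤ) ∣ p) : β 1 = p := by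
  have hlev := ((dualChar_iff.mp h).2.2 0 hg).1
  rw [h.1] at hlev
  simpa using hlev.unique ⟨⟨hp.1, by rwa [Int.dvd_neg]⟩, fun i hi => hp.2 hi.1⟩

variable {suppG : ℤ → Prop}

theorem tail (h : DualChar q supp g β e) (hg : 0 < g) {q' : ℕ} (he1 : e 1 = q')
    (htr : ∀ k, 1 ≤ k → k < g → ∀ m, IsLeast {i | supp i ∧ ¬ (e k : ℤ) ∣ i} m →
      IsLeast {i | suppG i ∧ ¬ (e k : ℤ) ∣ i} m) :
    DualChar q' suppG (g - 1) (fun k => β (k + 1)) (fun k => e (k + 1)) := by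
  obtain ⟨-, heg, hlev⟩ := dualChar_iff.mp h
  refine dualChar_iff.mpr ⟨he1, by rwa [Nat.sub_add_cancel hg], fun k hk => ?_⟩
  obtain ⟨hleast, hgcd⟩ := hlev (k + 1) (by omega)
  exact ⟨htr (k + 1) (by omega) (by omega) _ hleast, hgcd⟩

theorem updateHead (h : DualChar q supp g β e) (hg : 0 < g) {q' : ℕ}
    (h0 : IsLeast {i | suppG i ∧ ¬ (q' : ℤ) ∣ i} (-(β 1 : ℤ))) (he1 : e 1 = Nat.gcd q' (β 1))
    (htr : ∀ k, 1 ≤ k → k < g → ∀ m, IsLeast {i | supp i ∧ ¬ (e k : ℤ) ∣ i} m →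
      IsLeast {i | suppG i ∧ ¬ (e k : ℤ) ∣ i} m) :
    DualChar q' suppG g β (Function.update e 0 q') := by
  obtain ⟨-, heg, hlev⟩ := dualChar_iff.mp h
  refine dualChar_iff.mpr ⟨by simp, by simp [hg.ne', heg], fun k hk => ?_⟩
  cases k with
  | zero => simpa [he1] using h0
  | succ k =>
    obtain ⟨hleast, hgcd⟩ := hlev (k + 1) hk
    simpa [hgcd] using htr (k + 1) (by omega) hk _ hleast

end DualChar

/-- Here `F` and `G` are the expansions of `f` in `t = x^{1/q}` and of `g` in
`s = x₁^{1/(q-p)}`, `x₁ = x·f`; `S` is the change of parameter `s = S(t)`, so that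
`s^{q-p} = t^q·F(t)`, and `Composed S Yg (-Yf)` encodes `g = -f` up to a constant shift. -/
theorem fourier_inf_zero_dualPuiseux_general {K : Type*} [Field K] [CharZero K] [IsAlgClosed K]
    (q p : ℕ) (hp : 0 < p)
    (F : LaurentSeries K)
    (g : ℕ) (hg : 0 < g) (β e : ℕ → ℕ)
    (hchar : DualChar q (fun n => F.coeff n ≠ 0) g β e)
    (G : LaurentSeries K)
    (Yf Yg : PowerSeries K)
    (hYf : (HahnSeries.ofPowerSeries ℤ K Yf : LaurentSeries K) * F = 1)
    (hYg : (HahnSeries.ofPowerSeries ℤ K Yg : LaurentSeries K) * G = 1)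
    (S : PowerSeries K)
    (hS0 : PowerSeries.constantCoeff S = 0)
    (hS1 : PowerSeries.coeff 1 S ≠ 0)
    (hpq : p < q)
    (hSpow : (HahnSeries.ofPowerSeries ℤ K S : LaurentSeries K) ^ (q - p) =
      HahnSeries.single (q : ℤ) (1 : K) * F)
    (hcomp : Composed S Yg (-Yf)) :
    G.order = -(β 1 : ℤ) ∧
    ((q - p) ∣ β 1 →
      ∃ e' : ℕ → ℕ, DualChar (q - p) (fun n => G.coeff n ≠ 0) (g - 1)
        (fun k => β (k + 1)) e') ∧
    (¬ (q - p) ∣ β 1 →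
      ∃ e' : ℕ → ℕ, DualChar (q - p) (fun n => G.coeff n ≠ 0) g β e') := by
  have h : IsFourierPair p q S Yf Yg :=
    ⟨hpq, hS0, hS1, mul_pow_eq_X_pow_of_ofPowerSeries hYf hSpow, hcomp.comp_eq⟩
  have hF := LaurentSeries.isLeast_support_of_ofPowerSeries_mul_eq_one h.order_left hYf
  have hG := LaurentSeries.isLeast_support_of_ofPowerSeries_mul_eq_one h.order_right hYg
  have hβ1 : β 1 = p := hchar.beta_one_eq hg hF fun hdvd =>
    (Nat.le_of_dvd hp (Int.natCast_dvd_natCast.mp hdvd)).not_gt hpq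
  have htr : ∀ k, 1 ≤ k → k < g → ∀ m, IsLeast {i | F.coeff i ≠ 0 ∧ ¬ (e k : ℤ) ∣ i} m →
      IsLeast {i | G.coeff i ≠ 0 ∧ ¬ (e k : ℤ) ∣ i} m := fun k hk hkg m => by
    have hek : e k ∣ p := hβ1 ▸ hchar.dvd_beta_one hk hkg.le
    exact (h.isLeast_nonDvd_iff hYf hYg hek (Nat.pos_of_dvd_of_pos hek hp).ne' m).mp
  have hgcd : Nat.gcd q p = Nat.gcd (q - p) p := (Nat.gcd_sub_self_left hpq.le).symm
  refine ⟨by rw [(HahnSeries.isLeast_support_iff.mp hG).2, hβ1],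
    fun hdvd => ⟨_, hchar.tail hg ?_ htr⟩, fun hndvd => ⟨_, hchar.updateHead hg ?_ ?_ htr⟩⟩
  · rw [hchar.e_one_eq hg, hβ1, hgcd, Nat.gcd_eq_left (hβ1 ▸ hdvd)]
  · rw [hβ1] at hndvd ⊢
    exact ⟨⟨hG.1, by rwa [Int.dvd_neg, Int.natCast_dvd_natCast]⟩, fun i hi => hG.2 hi.1⟩
  · rw [hchar.e_one_eq hg, hβ1, hgcd]

/-- Suppose the irreducible `E_{f,q}` has dual Puiseux characteristic
`(q, p; β 1, …, β g)` with `p < q` (hence `p = β 1`).  The local Fourier transform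
`F^{(∞,0)}(E_{f,q}) ≅ E_{g,q-p}` is encoded as follows: `F` is the expansion of `f` in
`t = x^{1/q}`, `G` that of `g` in `s = x₁^{1/(q-p)}` where `x₁ = x·f`, so that
`s^{q-p} = t^q·F(t)` under the change of parameter `s = S(t)`, and `1/g ∘ S = -1/f`
(the relation `g = -f` up to the irrelevant constant shift).  Then `E_{g,q-p}` has dual
Puiseux characteristic `(q-p, β 1; β 2, …, β g)` if `(q-p) ∣ β 1`, and
`(q-p, β 1; β 1, …, β g)` otherwise. -/
theorem fourier_inf_zero_dualPuiseux {K : Type*} [Field K] [CharZero K] [IsAlgClosed K]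
    (q p : ℕ) (hq : 0 < q) (hp : 0 < p)
    (F : LaurentSeries K)
    (hFlow : ∀ n : ℤ, n < -(p : ℤ) → F.coeff n = 0)
    (hFlead : F.coeff (-(p : ℤ)) ≠ 0)
    (hFirr : RamIrred q q F)
    (g : ℕ) (hg : 0 < g) (β e : ℕ → ℕ)
    (hchar : DualChar q (fun n => F.coeff n ≠ 0) g β e)
    (G : LaurentSeries K) (hG : G ≠ 0)
    (Yf Yg : PowerSeries K)
    (hYf : (HahnSeries.ofPowerSeries ℤ K Yf : LaurentSeries K) * F = 1)
    (hYg : (HahnSeries.ofPowerSeries ℤ K Yg : LaurentSeries K) * G = 1)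
    (S : PowerSeries K)
    (hS0 : PowerSeries.constantCoeff S = 0)
    (hS1 : PowerSeries.coeff 1 S ≠ 0)
    (hpq : p < q)
    (hSpow : (HahnSeries.ofPowerSeries ℤ K S : LaurentSeries K) ^ (q - p) =
      HahnSeries.single (q : ℤ) (1 : K) * F)
    (hcomp : Composed S Yg (-Yf)) :
    G.order = -(β 1 : ℤ) ∧
    ((q - p) ∣ β 1 →
      ∃ e' : ℕ → ℕ, DualChar (q - p) (fun n => G.coeff n ≠ 0) (g - 1)
        (fun k => β (k + 1)) e') ∧
    (¬ (q - p) ∣ β 1 →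
      ∃ e' : ℕ → ℕ, DualChar (q - p) (fun n => G.coeff n ≠ 0) g β e') :=
  fourier_inf_zero_dualPuiseux_general q p hp F g hg β e hchar G Yf Yg hYf hYg S hS0 hS1 hpq hSpow
    hcomp
end

section
/- Let f be an irreducible curve germ with parametrization x = t^m, y = a_n t^n + a_{n+1}t^{n+1} + ⋯, a_n ≠ 0, n > m. Then the strict transform σ₁*(f) under the quadratic transform σ₁: (x₁,y₁) ↦ (x₁, x₁y₁) is irreducible with good parametrization x₁ = t^m, y₁ = a_n t^{n-m} + a_{n+1} t^{n-m+1} + ⋯, and consequently if f has Puiseux characteristic (m; β₁, …, β_g) with β₁ > 2m, then σ₁*(f) has Puiseux characteristic (m; β₁ - m, …, β_g - m). -/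
/-- The formal partial derivative of a two-variable formal power series. -/
noncomputable def mvPderiv {K : Type*} [Field K] (j : Fin 2) (f : MvPowerSeries (Fin 2) K) :
    MvPowerSeries (Fin 2) K :=
  fun d => ((d j + 1 : ℕ) : K) * MvPowerSeries.coeff (d + Finsupp.single j 1) f

/-- The intersection number of two plane curve germs `a, b ∈ K[[x,y]]`:
the `K`-dimension of `K[[x,y]]/⟨a,b⟩`. -/
noncomputable def mvInterNum (K : Type*) [Field K] (a b : MvPowerSeries (Fin 2) K) : ℕ :=
  Module.finrank K (MvPowerSeries (Fin 2) K ⧸ Ideal.span {a, b})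

/-- `EvalZero C A B` : the two-variable power series `C` vanishes when evaluated on the
pair of one-variable power series `(A, B)` (both assumed to have zero constant term),
expressed coefficientwise. -/
def EvalZero {K : Type*} [Field K] (C : MvPowerSeries (Fin 2) K) (A B : PowerSeries K) :
    Prop :=
  ∀ n : ℕ, ∑ p ∈ Finset.range (n + 1) ×ˢ Finset.range (n + 1),
    (MvPowerSeries.coeff (Finsupp.single 0 p.1 + Finsupp.single 1 p.2) C) *
      PowerSeries.coeff n (A ^ p.1 * B ^ p.2) = 0

/-- The quadratic transform `σ₁ : f(x,y) ↦ f(x, x·y)` on two-variable power series. -/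
noncomputable def sigma1 {K : Type*} [Field K] (f : MvPowerSeries (Fin 2) K) :
    MvPowerSeries (Fin 2) K :=
  fun d => if d 1 ≤ d 0 then
    MvPowerSeries.coeff (Finsupp.single 0 (d 0 - d 1) + Finsupp.single 1 (d 1)) f else 0


namespace STP

open Finset

variable {K : Type*} [Field K]

/-- coefficient at `(a,b)` -/
noncomputable def cf (w : MvPowerSeries (Fin 2) K) (a b : ℕ) : K :=
  MvPowerSeries.coeff (Finsupp.single 0 a + Finsupp.single 1 b) w

lemma sval0 (a b : ℕ) :
    ((Finsupp.single 0 a + Finsupp.single 1 b : Fin 2 →₀ ℕ)) 0 = a := by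
  simp [Finsupp.single_apply]

lemma sval1 (a b : ℕ) :
    ((Finsupp.single 0 a + Finsupp.single 1 b : Fin 2 →₀ ℕ)) 1 = b := by
  simp [Finsupp.single_apply]

lemma fin2_eq (d : Fin 2 →₀ ℕ) : d = Finsupp.single 0 (d 0) + Finsupp.single 1 (d 1) := by
  ext i
  fin_cases i <;> simp [Finsupp.single_apply]

lemma coeff_cf (w : MvPowerSeries (Fin 2) K) (d : Fin 2 →₀ ℕ) :
    MvPowerSeries.coeff d w = cf w (d 0) (d 1) := by
  rw [cf, ← fin2_eq]

lemma single_sum_inj {a b a' b' : ℕ}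
    (h : Finsupp.single (0 : Fin 2) a + Finsupp.single 1 b
       = Finsupp.single 0 a' + Finsupp.single 1 b') : a = a' ∧ b = b' := by
  constructor
  · have := congrArg (fun d => d 0) h; simpa [sval0] using this
  · have := congrArg (fun d => d 1) h; simpa [sval1] using this

/-- the key bridge: product coefficients via double ℕ-antidiagonals -/
lemma cf_mul (u v : MvPowerSeries (Fin 2) K) (a b : ℕ) :
    cf (u * v) a b = ∑ p ∈ Finset.HasAntidiagonal.antidiagonal a, ∑ q ∈ Finset.HasAntidiagonal.antidiagonal b,
      cf u p.1 q.1 * cf v p.2 q.2 := by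
  classical
  rw [cf, MvPowerSeries.coeff_mul, ← Finset.sum_product']
  refine Finset.sum_nbij' (i := fun x => ((x.1 0, x.2 0), (x.1 1, x.2 1)))
    (j := fun p => (Finsupp.single 0 p.1.1 + Finsupp.single 1 p.2.1,
                    Finsupp.single 0 p.1.2 + Finsupp.single 1 p.2.2)) ?_ ?_ ?_ ?_ ?_
  · intro x hx
    rw [Finset.HasAntidiagonal.mem_antidiagonal] at hx
    simp only [Finset.mem_product, Finset.HasAntidiagonal.mem_antidiagonal]
    constructor
    · have := congrArg (fun d => d 0) hx; simpa [sval0] using this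
    · have := congrArg (fun d => d 1) hx; simpa [sval1] using this
  · intro p hp
    simp only [Finset.mem_product, Finset.HasAntidiagonal.mem_antidiagonal] at hp
    rw [Finset.HasAntidiagonal.mem_antidiagonal]
    ext i
    fin_cases i <;> simp [Finsupp.single_apply, hp.1, hp.2]
  · intro x hx
    dsimp only
    rw [← fin2_eq, ← fin2_eq]
  · intro p hp
    dsimp only
    rw [Prod.mk.injEq, Prod.mk.injEq, Prod.mk.injEq]
    refine ⟨⟨sval0 _ _, sval0 _ _⟩, sval1 _ _, sval1 _ _⟩
  · intro x hx
    rw [coeff_cf u, coeff_cf v]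

lemma cf_zero_zero (w : MvPowerSeries (Fin 2) K) :
    cf w 0 0 = MvPowerSeries.constantCoeff w := by
  rw [cf]
  simp

lemma cf_sigma1 (w : MvPowerSeries (Fin 2) K) (A B : ℕ) :
    cf (sigma1 w) A B = if B ≤ A then cf w (A - B) B else 0 := by
  rw [cf, MvPowerSeries.coeff_apply, sigma1]
  rw [sval0, sval1]
  split_ifs with h
  · rw [coeff_cf, sval0, sval1, cf]
  · rfl

lemma single_le_iff {j a b : ℕ} :
    Finsupp.single (0 : Fin 2) j ≤ Finsupp.single 0 a + Finsupp.single 1 b ↔ j ≤ a := by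
  rw [Finsupp.le_iff]
  constructor
  · intro h
    by_cases hj : j = 0
    · omega
    · have := h 0 (by simp [Finsupp.mem_support_iff, hj])
      simpa [sval0, Finsupp.single_apply] using this
  · intro h s _
    fin_cases s <;> simp [sval0, sval1, Finsupp.single_apply, h]

lemma cf_X_pow_mul (j : ℕ) (h : MvPowerSeries (Fin 2) K) (a b : ℕ) :
    cf ((MvPowerSeries.X 0) ^ j * h) a b = if j ≤ a then cf h (a - j) b else 0 := by
  classical
  rw [cf, MvPowerSeries.X_pow_eq, MvPowerSeries.coeff_monomial_mul]
  by_cases hja : j ≤ a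
  · rw [if_pos (single_le_iff.mpr hja), if_pos hja, one_mul]
    have he : (Finsupp.single 0 a + Finsupp.single 1 b) - Finsupp.single (0 : Fin 2) j
        = Finsupp.single 0 (a - j) + Finsupp.single 1 b := by
      ext i
      rw [Finsupp.tsub_apply]
      fin_cases i <;> simp [Finsupp.single_apply]
    rw [he, cf]
  · rw [if_neg (fun hc => hja (single_le_iff.mp hc)), if_neg hja]

/-- columns: `col w a ∈ K[[y]]` is the coefficient of `x^a`. -/
noncomputable def col (w : MvPowerSeries (Fin 2) K) (a : ℕ) : PowerSeries K :=
  PowerSeries.mk fun b => cf w a b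

lemma coeff_col (w : MvPowerSeries (Fin 2) K) (a b : ℕ) :
    PowerSeries.coeff b (col w a) = cf w a b :=
  PowerSeries.coeff_mk _ _

lemma col_mul (u v : MvPowerSeries (Fin 2) K) (a : ℕ) :
    col (u * v) a = ∑ p ∈ Finset.HasAntidiagonal.antidiagonal a, col u p.1 * col v p.2 := by
  ext b
  rw [coeff_col, cf_mul, map_sum]
  refine Finset.sum_congr rfl fun p _ => ?_
  rw [PowerSeries.coeff_mul]
  refine Finset.sum_congr rfl fun q _ => ?_
  rw [coeff_col, coeff_col]

noncomputable def fromCol (F : ℕ → PowerSeries K) : MvPowerSeries (Fin 2) K :=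
  fun d => PowerSeries.coeff (d 1) (F (d 0))

lemma cf_fromCol (F : ℕ → PowerSeries K) (a b : ℕ) :
    cf (fromCol F) a b = PowerSeries.coeff b (F a) := by
  rw [cf, MvPowerSeries.coeff_apply, fromCol, sval0, sval1]

lemma col_fromCol (F : ℕ → PowerSeries K) (a : ℕ) : col (fromCol F) a = F a := by
  ext b
  rw [coeff_col, cf_fromCol]

/-- `x^ν · w` lies in the image of `σ₁`. -/
def SigmaIm (w : MvPowerSeries (Fin 2) K) (ν : ℕ) : Prop :=
  ∀ a b : ℕ, a + ν < b → cf w a b = 0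

lemma sigmaIm_mul {u v : MvPowerSeries (Fin 2) K} (hu : SigmaIm u 0) (hv : SigmaIm v 0) :
    SigmaIm (u * v) 0 := by
  intro a b hab
  rw [cf_mul]
  refine Finset.sum_eq_zero fun p hp => Finset.sum_eq_zero fun q hq => ?_
  rw [Finset.HasAntidiagonal.mem_antidiagonal] at hp hq
  rcases lt_or_ge p.1 q.1 with h | h
  · rw [hu p.1 q.1 (by omega), zero_mul]
  · rw [hv p.2 q.2 (by omega), mul_zero]

lemma sigmaIm_X_pow_mul {h : MvPowerSeries (Fin 2) K} {j : ℕ} (hh : SigmaIm h j) :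
    SigmaIm ((MvPowerSeries.X 0) ^ j * h) 0 := by
  intro a b hab
  rw [cf_X_pow_mul]
  split_ifs with hja
  · exact hh (a - j) b (by omega)
  · rfl

/-- inverse of `σ₁` (as a total map). -/
noncomputable def untwist (h : MvPowerSeries (Fin 2) K) : MvPowerSeries (Fin 2) K :=
  fun d => cf h (d 0 + d 1) (d 1)

lemma cf_untwist (h : MvPowerSeries (Fin 2) K) (a b : ℕ) :
    cf (untwist h) a b = cf h (a + b) b := by
  rw [cf, MvPowerSeries.coeff_apply, untwist, sval0, sval1]

lemma untwist_sigma1 (w : MvPowerSeries (Fin 2) K) : untwist (sigma1 w) = w := by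
  ext d
  rw [coeff_cf, coeff_cf, cf_untwist, cf_sigma1, if_pos (by omega)]
  congr 1
  omega

lemma untwist_mul {h₁ h₂ : MvPowerSeries (Fin 2) K}
    (H1 : SigmaIm h₁ 0) (H2 : SigmaIm h₂ 0) :
    untwist (h₁ * h₂) = untwist h₁ * untwist h₂ := by
  classical
  ext d
  rw [coeff_cf, coeff_cf, cf_untwist]
  generalize d 0 = a
  generalize d 1 = b
  rw [cf_mul, cf_mul]
  simp_rw [cf_untwist]
  rw [← Finset.sum_product', ← Finset.sum_product']
  have h1 : ∑ pq ∈ (Finset.HasAntidiagonal.antidiagonal (a + b) ×ˢ Finset.HasAntidiagonal.antidiagonal b).filter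
        (fun pq => pq.2.1 ≤ pq.1.1 ∧ pq.2.2 ≤ pq.1.2),
        cf h₁ pq.1.1 pq.2.1 * cf h₂ pq.1.2 pq.2.2
      = ∑ pq ∈ Finset.HasAntidiagonal.antidiagonal (a + b) ×ˢ Finset.HasAntidiagonal.antidiagonal b,
        cf h₁ pq.1.1 pq.2.1 * cf h₂ pq.1.2 pq.2.2 := by
    refine Finset.sum_filter_of_ne fun pq hpq hne => ?_
    by_contra hcon
    rcases not_and_or.mp hcon with hc | hc
    · exact hne (by rw [H1 pq.1.1 pq.2.1 (by omega), zero_mul])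
    · exact hne (by rw [H2 pq.1.2 pq.2.2 (by omega), mul_zero])
  rw [← h1]
  refine (Finset.sum_nbij'
    (i := fun rq : (ℕ × ℕ) × ℕ × ℕ => ((rq.1.1 + rq.2.1, rq.1.2 + rq.2.2), rq.2))
    (j := fun pq : (ℕ × ℕ) × ℕ × ℕ => ((pq.1.1 - pq.2.1, pq.1.2 - pq.2.2), pq.2))
    ?_ ?_ ?_ ?_ ?_).symm
  · intro x hx
    simp only [Finset.mem_filter, Finset.mem_product, Finset.HasAntidiagonal.mem_antidiagonal] at hx ⊢
    omega
  · intro x hx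
    simp only [Finset.mem_filter, Finset.mem_product, Finset.HasAntidiagonal.mem_antidiagonal] at hx ⊢
    omega
  · intro x hx
    simp only [Finset.mem_filter, Finset.mem_product, Finset.HasAntidiagonal.mem_antidiagonal] at hx
    have e1 : x.1.1 + x.2.1 - x.2.1 = x.1.1 := by omega
    have e2 : x.1.2 + x.2.2 - x.2.2 = x.1.2 := by omega
    dsimp only
    rw [e1, e2]
  · intro x hx
    simp only [Finset.mem_filter, Finset.mem_product, Finset.HasAntidiagonal.mem_antidiagonal] at hx
    have e1 : x.1.1 - x.2.1 + x.2.1 = x.1.1 := by omega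
    have e2 : x.1.2 - x.2.2 + x.2.2 = x.1.2 := by omega
    dsimp only
    rw [e1, e2]
  · intro x hx
    rfl

/-- shift a one-variable power series down by `b`. -/
noncomputable def psShift (b : ℕ) (t : PowerSeries K) : PowerSeries K :=
  PowerSeries.mk fun i => PowerSeries.coeff (b + i) t

/-- the Weierstrass-type recursion producing the normalizing unit. -/
noncomputable def wpc (u : MvPowerSeries (Fin 2) K) (b : ℕ) (V : PowerSeries K) :
    ℕ → PowerSeries K
  | 0 => V
  | (a+1) => -(V * psShift b (∑ i ∈ (Finset.range (a+1)).attach,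
      col u ((i:ℕ)+1) * wpc u b V (a-(i:ℕ))))
  decreasing_by have := Finset.mem_range.mp i.2; omega

lemma antidiag_split (F : ℕ → ℕ → PowerSeries K) (a : ℕ) :
    ∑ p ∈ Finset.HasAntidiagonal.antidiagonal (a+1), F p.1 p.2
      = F 0 (a+1) + ∑ i ∈ Finset.range (a+1), F (i+1) (a-i) := by
  rw [Finset.Nat.sum_antidiagonal_eq_sum_range_succ (f := F), Finset.sum_range_succ']
  have h1 : (a + 1) - 0 = a + 1 := rfl
  rw [h1, add_comm]
  congr 1
  refine Finset.sum_congr rfl fun i _ => ?_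
  have hh : a + 1 - (i + 1) = a - i := by omega
  rw [hh]

lemma wpc_col (u : MvPowerSeries (Fin 2) K) (b : ℕ) (V : PowerSeries K) (a : ℕ) :
    col (u * fromCol (wpc u b V)) a
      = ∑ p ∈ Finset.HasAntidiagonal.antidiagonal a, col u p.1 * wpc u b V p.2 := by
  rw [col_mul]
  exact Finset.sum_congr rfl fun p _ => by rw [col_fromCol]

lemma wpc_spec (u : MvPowerSeries (Fin 2) K) (b : ℕ) (U0 V : PowerSeries K)
    (hcol : col u 0 = PowerSeries.X ^ b * U0) (hUV : U0 * V = 1) :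
    (col (u * fromCol (wpc u b V)) 0 = PowerSeries.X ^ b) ∧
    ∀ a, 1 ≤ a → ∀ i, b ≤ i →
      PowerSeries.coeff i (col (u * fromCol (wpc u b V)) a) = 0 := by
  constructor
  · rw [wpc_col, Finset.Nat.antidiagonal_zero, Finset.sum_singleton]
    show col u 0 * wpc u b V 0 = _
    rw [hcol, wpc]
    rw [mul_assoc, hUV, mul_one]
  · intro a ha i hi
    obtain ⟨a', rfl⟩ : ∃ a', a = a' + 1 := ⟨a - 1, by omega⟩
    have hsplit : col (u * fromCol (wpc u b V)) (a'+1)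
        = col u 0 * wpc u b V (a'+1)
          + ∑ i ∈ Finset.range (a'+1), col u (i+1) * wpc u b V (a'-i) := by
      rw [wpc_col]
      exact antidiag_split (fun x y => col u x * wpc u b V y) a'
    rw [hsplit]
    set t := ∑ i ∈ Finset.range (a'+1), col u (i+1) * wpc u b V (a'-i) with ht
    have hwa : wpc u b V (a'+1) = -(V * psShift b t) := by
      rw [wpc, ht]
      congr 2
      rw [Finset.sum_attach (Finset.range (a'+1))
        (fun i => col u (i+1) * wpc u b V (a'-i))]
    have hterm : col u 0 * wpc u b V (a'+1) = -(PowerSeries.X ^ b * psShift b t) := by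
      rw [hwa, hcol]
      have : PowerSeries.X ^ b * U0 * -(V * psShift b t)
          = -(PowerSeries.X ^ b * ((U0 * V) * psShift b t)) := by ring
      rw [this, hUV, one_mul]
    rw [hterm, map_add, map_neg, PowerSeries.coeff_X_pow_mul', if_pos hi]
    rw [psShift, PowerSeries.coeff_mk]
    have : b + (i - b) = i := by omega
    rw [this, neg_add_cancel]

lemma wp_lite (u : MvPowerSeries (Fin 2) K) (h0 : cf u 0 0 = 0) (hx : col u 0 ≠ 0) :
    ∃ (c : MvPowerSeries (Fin 2) K) (b : ℕ), 1 ≤ b ∧ IsUnit c ∧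
      col (u * c) 0 = PowerSeries.X ^ b ∧
      ∀ a, 1 ≤ a → ∀ i, b ≤ i → PowerSeries.coeff i (col (u * c) a) = 0 := by
  classical
  have hex : ∃ b, PowerSeries.coeff b (col u 0) ≠ 0 := by
    by_contra hc
    push_neg at hc
    exact hx (PowerSeries.ext fun i => by rw [hc i, map_zero])
  have hb : PowerSeries.coeff (Nat.find hex) (col u 0) ≠ 0 := Nat.find_spec hex
  set b := Nat.find hex with hbdef
  have hmin : ∀ i, i < b → PowerSeries.coeff i (col u 0) = 0 := fun i hi => by
    have := Nat.find_min hex hi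
    simpa using this
  have hb1 : 1 ≤ b := by
    rcases Nat.eq_zero_or_pos b with h | h
    · exfalso
      apply hb
      rw [h, coeff_col, h0]
    · exact h
  set U0 : PowerSeries K := PowerSeries.mk fun i => PowerSeries.coeff (b + i) (col u 0)
    with hU0def
  have hcol : col u 0 = PowerSeries.X ^ b * U0 := by
    ext i
    rw [PowerSeries.coeff_X_pow_mul']
    split_ifs with h
    · rw [hU0def, PowerSeries.coeff_mk]
      have hh : b + (i - b) = i := by omega
      rw [hh]
    · exact hmin i (by omega)
  have hU0 : PowerSeries.constantCoeff U0 ≠ 0 := by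
    rw [← PowerSeries.coeff_zero_eq_constantCoeff_apply, hU0def, PowerSeries.coeff_mk]
    simpa using hb
  set V := PowerSeries.invOfUnit U0 (Units.mk0 _ hU0) with hVdef
  have hUV : U0 * V = 1 := PowerSeries.mul_invOfUnit U0 _ rfl
  have hVc : PowerSeries.constantCoeff V ≠ 0 := by
    rw [hVdef, PowerSeries.constantCoeff_invOfUnit]
    exact Units.ne_zero _
  refine ⟨fromCol (wpc u b V), b, hb1, ?_, (wpc_spec u b U0 V hcol hUV).1,
    (wpc_spec u b U0 V hcol hUV).2⟩
  rw [MvPowerSeries.isUnit_iff_constantCoeff]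
  rw [← cf_zero_zero, cf_fromCol, wpc]
  rw [PowerSeries.coeff_zero_eq_constantCoeff_apply]
  exact isUnit_iff_ne_zero.mpr hVc

/-- distinguished polynomial shape. -/
def Dist (P : MvPowerSeries (Fin 2) K) (b : ℕ) : Prop :=
  col P 0 = PowerSeries.X ^ b ∧
  ∀ a, 1 ≤ a → ∀ i, b ≤ i → PowerSeries.coeff i (col P a) = 0

lemma dist_mul {P Q : MvPowerSeries (Fin 2) K} {b d : ℕ}
    (hP : Dist P b) (hQ : Dist Q d) : Dist (P * Q) (b + d) := by
  constructor
  · rw [col_mul, Finset.Nat.antidiagonal_zero, Finset.sum_singleton]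
    show col P 0 * col Q 0 = _
    rw [hP.1, hQ.1, pow_add]
  · intro a ha i hi
    rw [col_mul, map_sum]
    refine Finset.sum_eq_zero fun p hp => ?_
    rw [Finset.HasAntidiagonal.mem_antidiagonal] at hp
    rw [PowerSeries.coeff_mul]
    refine Finset.sum_eq_zero fun q hq => ?_
    rw [Finset.HasAntidiagonal.mem_antidiagonal] at hq
    rcases Nat.eq_zero_or_pos p.1 with h1 | h1
    · rw [h1, hP.1, PowerSeries.coeff_X_pow]
      split_ifs with hqb
      · rw [one_mul]
        exact hQ.2 p.2 (by omega) q.2 (by omega)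
      · rw [zero_mul]
    · rcases Nat.eq_zero_or_pos p.2 with h2 | h2
      · rw [h2, hQ.1, PowerSeries.coeff_X_pow]
        split_ifs with hqd
        · rw [mul_one]
          exact hP.2 p.1 h1 q.1 (by omega)
        · rw [mul_zero]
      · rcases le_or_gt b q.1 with h | h
        · rw [hP.2 p.1 h1 q.1 h, zero_mul]
        · rw [hQ.2 p.2 h2 q.2 (by omega), mul_zero]

lemma dist_sigmaIm {P : MvPowerSeries (Fin 2) K} {b : ℕ} (hP : Dist P b) : SigmaIm P b := by
  intro a j hj
  rcases Nat.eq_zero_or_pos a with h | h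
  · rw [h, ← coeff_col, hP.1, PowerSeries.coeff_X_pow, if_neg (by omega)]
  · rw [← coeff_col]
    exact hP.2 a h j (by omega)

lemma div_bound {P W gg : MvPowerSeries (Fin 2) K} {D k : ℕ}
    (hD : Dist P D) (hg : gg = P * W) (hS : SigmaIm gg k)
    (hW : cf W 0 0 ≠ 0) :
    D ≤ k ∧ SigmaIm W (k - D) := by
  have hcol : ∀ a, col gg a = ∑ p ∈ Finset.HasAntidiagonal.antidiagonal a, col P p.1 * col W p.2 :=
    fun a => by rw [hg, col_mul]
  have hDk : D ≤ k := by
    by_contra hc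
    push_neg at hc
    have h0 : cf gg 0 D = 0 := hS 0 D (by omega)
    rw [← coeff_col, hcol 0, Finset.Nat.antidiagonal_zero, Finset.sum_singleton] at h0
    change PowerSeries.coeff D (col P 0 * col W 0) = 0 at h0
    rw [hD.1, PowerSeries.coeff_X_pow_mul', if_pos le_rfl, Nat.sub_self, coeff_col] at h0
    exact hW h0
  refine ⟨hDk, ?_⟩
  intro a
  induction a using Nat.strong_induction_on with
  | _ a IH =>
    intro b hb
    have h0 : cf gg a (b + D) = 0 := hS a (b + D) (by omega)
    rw [← coeff_col, hcol a, map_sum] at h0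
    have hmem : ((0 : ℕ), a) ∈ Finset.HasAntidiagonal.antidiagonal a := by
      rw [Finset.HasAntidiagonal.mem_antidiagonal]
      simp
    rw [← Finset.sum_erase_add _ _ hmem] at h0
    have hz : ∑ p ∈ (Finset.HasAntidiagonal.antidiagonal a).erase (0, a),
        PowerSeries.coeff (b + D) (col P p.1 * col W p.2) = 0 := by
      refine Finset.sum_eq_zero fun p hp => ?_
      rw [Finset.mem_erase, Finset.HasAntidiagonal.mem_antidiagonal] at hp
      have hp1 : 1 ≤ p.1 := by
        rcases Nat.eq_zero_or_pos p.1 with h | h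
        · exact absurd (Prod.ext_iff.mpr ⟨h, by omega⟩) hp.1
        · exact h
      rw [PowerSeries.coeff_mul]
      refine Finset.sum_eq_zero fun q hq => ?_
      rw [Finset.HasAntidiagonal.mem_antidiagonal] at hq
      rcases le_or_gt D q.1 with h | h
      · rw [hD.2 p.1 hp1 q.1 h, zero_mul]
      · rw [coeff_col W p.2 q.2, IH p.2 (by omega) q.2 (by omega), mul_zero]
    rw [hz, zero_add] at h0
    change PowerSeries.coeff (b + D) (col P 0 * col W a) = 0 at h0
    rw [hD.1, PowerSeries.coeff_X_pow_mul', if_pos (by omega)] at h0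
    have he : b + D - D = b := by omega
    rw [he, coeff_col] at h0
    exact h0

lemma irreducible_g {f g : MvPowerSeries (Fin 2) K} (hf : Irreducible f) (k : ℕ)
    (hσ : sigma1 f = (MvPowerSeries.X 0) ^ k * g)
    (hcol0 : col g 0 ≠ 0)
    (hconst : cf g 0 0 = 0) :
    Irreducible g := by
  have hgcf : ∀ a b, cf ((MvPowerSeries.X 0 : MvPowerSeries (Fin 2) K) ^ k * g) a b
      = cf (sigma1 f) a b := fun a b => by rw [hσ]
  have hSg : SigmaIm g k := by
    intro a b hab
    have h1 := hgcf (a + k) b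
    rw [cf_X_pow_mul, if_pos (by omega), cf_sigma1, if_neg (by omega)] at h1
    have he : a + k - k = a := by omega
    rw [he] at h1
    exact h1
  constructor
  · intro hu
    have h2 := MvPowerSeries.isUnit_iff_constantCoeff.mp hu
    rw [← cf_zero_zero, hconst] at h2
    exact h2.ne_zero rfl
  · intro u v hguv
    by_contra hcon
    push_neg at hcon
    obtain ⟨hu, hv⟩ := hcon
    have hu0 : cf u 0 0 = 0 := by
      by_contra h
      refine hu (MvPowerSeries.isUnit_iff_constantCoeff.mpr ?_)
      rw [← cf_zero_zero]
      exact isUnit_iff_ne_zero.mpr h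
    have hv0 : cf v 0 0 = 0 := by
      by_contra h
      refine hv (MvPowerSeries.isUnit_iff_constantCoeff.mpr ?_)
      rw [← cf_zero_zero]
      exact isUnit_iff_ne_zero.mpr h
    have hgcol : col g 0 = col u 0 * col v 0 := by
      rw [hguv, col_mul, Finset.Nat.antidiagonal_zero, Finset.sum_singleton]
    have hucol : col u 0 ≠ 0 := fun h => hcol0 (by rw [hgcol, h, zero_mul])
    have hvcol : col v 0 ≠ 0 := fun h => hcol0 (by rw [hgcol, h, mul_zero])
    obtain ⟨cu, bu, hbu, hcuU, hPu0, hPu⟩ := wp_lite u hu0 hucol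
    obtain ⟨cv, bv, hbv, hcvU, hQv0, hQv⟩ := wp_lite v hv0 hvcol
    have hDP : Dist (u * cu) bu := ⟨hPu0, hPu⟩
    have hDQ : Dist (v * cv) bv := ⟨hQv0, hQv⟩
    have hDPQ : Dist ((u * cu) * (v * cv)) (bu + bv) := dist_mul hDP hDQ
    obtain ⟨w, hw⟩ := hcuU.mul hcvU
    have hgPQW : g = ((u * cu) * (v * cv)) * ((w⁻¹ : (MvPowerSeries (Fin 2) K)ˣ) :
        MvPowerSeries (Fin 2) K) := by
      have h1 : ((u * cu) * (v * cv)) * ((w⁻¹ : (MvPowerSeries (Fin 2) K)ˣ) :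
          MvPowerSeries (Fin 2) K) = (u * v) * ((cu * cv) *
          ((w⁻¹ : (MvPowerSeries (Fin 2) K)ˣ) : MvPowerSeries (Fin 2) K)) := by ring
      rw [h1, ← hw, Units.mul_inv, mul_one, hguv]
    have hWc : cf ((w⁻¹ : (MvPowerSeries (Fin 2) K)ˣ) : MvPowerSeries (Fin 2) K) 0 0 ≠ 0 := by
      rw [cf_zero_zero]
      have h2 := MvPowerSeries.isUnit_iff_constantCoeff.mp (w⁻¹ : _ˣ).isUnit
      exact h2.ne_zero
    obtain ⟨hDk, hSW⟩ := div_bound hDPQ hgPQW hSg hWc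
    have hSA : SigmaIm ((MvPowerSeries.X 0 : MvPowerSeries (Fin 2) K) ^ bu * (u * cu)) 0 :=
      sigmaIm_X_pow_mul (dist_sigmaIm hDP)
    have hSB : SigmaIm ((MvPowerSeries.X 0 : MvPowerSeries (Fin 2) K) ^ bv * (v * cv)) 0 :=
      sigmaIm_X_pow_mul (dist_sigmaIm hDQ)
    have hSC : SigmaIm ((MvPowerSeries.X 0 : MvPowerSeries (Fin 2) K) ^ (k - (bu + bv)) *
        ((w⁻¹ : (MvPowerSeries (Fin 2) K)ˣ) : MvPowerSeries (Fin 2) K)) 0 :=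
      sigmaIm_X_pow_mul hSW
    have hABC : sigma1 f
        = ((MvPowerSeries.X 0 : MvPowerSeries (Fin 2) K) ^ bu * (u * cu)) *
          (((MvPowerSeries.X 0 : MvPowerSeries (Fin 2) K) ^ bv * (v * cv)) *
           ((MvPowerSeries.X 0 : MvPowerSeries (Fin 2) K) ^ (k - (bu + bv)) *
            ((w⁻¹ : (MvPowerSeries (Fin 2) K)ˣ) : MvPowerSeries (Fin 2) K))) := by
      rw [hσ, hgPQW]
      have hx : (MvPowerSeries.X 0 : MvPowerSeries (Fin 2) K) ^ k
          = (MvPowerSeries.X 0 : MvPowerSeries (Fin 2) K) ^ bu *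
            ((MvPowerSeries.X 0 : MvPowerSeries (Fin 2) K) ^ bv *
             (MvPowerSeries.X 0 : MvPowerSeries (Fin 2) K) ^ (k - (bu + bv))) := by
        rw [← pow_add, ← pow_add]
        congr 1
        omega
      rw [hx]
      ring
    have hfeq : f = untwist ((MvPowerSeries.X 0 : MvPowerSeries (Fin 2) K) ^ bu * (u * cu)) *
        (untwist ((MvPowerSeries.X 0 : MvPowerSeries (Fin 2) K) ^ bv * (v * cv)) *
         untwist ((MvPowerSeries.X 0 : MvPowerSeries (Fin 2) K) ^ (k - (bu + bv)) *
          ((w⁻¹ : (MvPowerSeries (Fin 2) K)ˣ) : MvPowerSeries (Fin 2) K))) := by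
      conv_lhs => rw [← untwist_sigma1 f]
      rw [hABC, untwist_mul hSA (sigmaIm_mul hSB hSC), untwist_mul hSB hSC]
    have hA0 : cf (untwist ((MvPowerSeries.X 0 : MvPowerSeries (Fin 2) K) ^ bu * (u * cu))) 0 0
        = 0 := by
      rw [cf_untwist, cf_X_pow_mul, if_neg (by omega)]
    have hB0 : cf (untwist ((MvPowerSeries.X 0 : MvPowerSeries (Fin 2) K) ^ bv * (v * cv))) 0 0
        = 0 := by
      rw [cf_untwist, cf_X_pow_mul, if_neg (by omega)]
    rcases hf.isUnit_or_isUnit hfeq with h | h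
    · have h2 := MvPowerSeries.isUnit_iff_constantCoeff.mp h
      rw [← cf_zero_zero, hA0] at h2
      exact h2.ne_zero rfl
    · have h2 := MvPowerSeries.isUnit_iff_constantCoeff.mp h
      have hz : MvPowerSeries.constantCoeff
          (untwist ((MvPowerSeries.X 0 : MvPowerSeries (Fin 2) K) ^ bv * (v * cv)) *
           untwist ((MvPowerSeries.X 0 : MvPowerSeries (Fin 2) K) ^ (k - (bu + bv)) *
            ((w⁻¹ : (MvPowerSeries (Fin 2) K)ˣ) : MvPowerSeries (Fin 2) K))) = 0 := by
        rw [map_mul, ← cf_zero_zero, hB0, zero_mul]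
      rw [hz] at h2
      exact h2.ne_zero rfl

lemma coeff_pow_zero (Z : PowerSeries K) (c : ℕ)
    (hZ : ∀ i, i < c → PowerSeries.coeff i Z = 0) :
    ∀ p j, j < c * p → PowerSeries.coeff j (Z ^ p) = 0 := by
  intro p
  induction p with
  | zero => intro j hj; omega
  | succ p IH =>
    intro j hj
    rw [pow_succ, PowerSeries.coeff_mul]
    refine Finset.sum_eq_zero fun q hq => ?_
    rw [Finset.HasAntidiagonal.mem_antidiagonal] at hq
    rcases lt_or_ge q.1 (c * p) with h | h
    · rw [IH q.1 h, zero_mul]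
    · have hcp : c * (p + 1) = c * p + c := by ring
      rw [hZ q.2 (by omega), mul_zero]

end STP

section MainProof

open STP

variable {K : Type*} [Field K]

theorem strict_transform_parametrization' {K : Type*} [Field K]
    (f g : MvPowerSeries (Fin 2) K) (hf : Irreducible f)
    (m n k : ℕ) (hm : 0 < m) (hmn : m < n)
    (Y : PowerSeries K)
    (hYord : ∀ i : ℕ, i < n → PowerSeries.coeff i Y = 0)
    (hYlead : PowerSeries.coeff n Y ≠ 0)
    (hvan : EvalZero f (PowerSeries.X ^ m) Y)
    (hgood : ∀ r : ℕ, 0 < r → (∀ i : ℕ, PowerSeries.coeff i Y ≠ 0 → r ∣ i) → r ∣ m → r = 1)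
    (hmultlow : ∀ d : Fin 2 →₀ ℕ, d 0 + d 1 < k → MvPowerSeries.coeff d f = 0)
    (hmult : ∃ d : Fin 2 →₀ ℕ, d 0 + d 1 = k ∧ MvPowerSeries.coeff d f ≠ 0)
    (hσ : sigma1 f = (MvPowerSeries.X 0) ^ k * g) :
    ∃ Y' : PowerSeries K,
      Y = PowerSeries.X ^ m * Y' ∧
      Irreducible g ∧
      EvalZero g (PowerSeries.X ^ m) Y' ∧
      ∀ (G : ℕ) (β e : ℕ → ℕ),
        PCharN m (fun i => PowerSeries.coeff i Y ≠ 0) G β e →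
        2 * m < β 1 →
        PCharN m (fun i => PowerSeries.coeff i Y' ≠ 0) G (fun j => β j - m) e := by
  classical
  -- the quotient series
  set Y' : PowerSeries K := PowerSeries.mk fun i => PowerSeries.coeff (m + i) Y with hY'def
  have hY'co : ∀ i, PowerSeries.coeff i Y' = PowerSeries.coeff (m + i) Y := fun i => by
    rw [hY'def, PowerSeries.coeff_mk]
  have hYY' : Y = PowerSeries.X ^ m * Y' := by
    ext i
    rw [PowerSeries.coeff_X_pow_mul']
    split_ifs with h
    · rw [hY'co]
      have hh : m + (i - m) = i := by omega
      rw [hh]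
    · exact hYord i (by omega)
  have hY'ord : ∀ i, i < n - m → PowerSeries.coeff i Y' = 0 := fun i hi => by
    rw [hY'co]
    exact hYord (m + i) (by omega)
  -- multiplicity facts about k
  have hkmk : k ≤ m * k := Nat.le_mul_of_pos_left k hm
  have hcff : ∀ p : ℕ × ℕ, p.1 + p.2 < k → cf f p.1 p.2 = 0 := by
    intro p hp
    have := hmultlow (Finsupp.single 0 p.1 + Finsupp.single 1 p.2) (by rw [sval0, sval1]; omega)
    exact this
  -- cf f k 0 = 0 , from hvan at degree m*k
  have hk0 : cf f k 0 = 0 := by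
    have hv := hvan (m * k)
    rw [Finset.sum_eq_single ((k, 0) : ℕ × ℕ)] at hv
    · rw [pow_zero, mul_one, ← pow_mul] at hv
      rw [PowerSeries.coeff_X_pow, if_pos rfl, mul_one] at hv
      exact hv
    · intro p hp hne
      rcases lt_or_ge (p.1 + p.2) k with h | h
      · rw [show (MvPowerSeries.coeff (Finsupp.single 0 p.1 + Finsupp.single 1 p.2)) f
          = cf f p.1 p.2 from rfl, hcff p h, zero_mul]
      · have hz : PowerSeries.coeff (m * k) ((PowerSeries.X ^ m) ^ p.1 * Y ^ p.2) = 0 := by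
          rw [← pow_mul, PowerSeries.coeff_X_pow_mul']
          split_ifs with hle
          · rcases Nat.eq_zero_or_pos p.2 with h2 | h2
            · exfalso
              have hmp : m * p.1 ≤ m * k := by omega
              have hp1le : p.1 ≤ k := Nat.le_of_mul_le_mul_left hmp hm
              have hp1 : p.1 = k := by omega
              exact hne (Prod.ext_iff.mpr ⟨hp1, h2⟩)
            · have h3 : m * k ≤ m * p.1 + m * p.2 := by
                have : m * k ≤ m * (p.1 + p.2) := Nat.mul_le_mul_left m h
                rw [Nat.mul_add] at this
                exact this
              have h4 : m * p.2 < n * p.2 := Nat.mul_lt_mul_of_lt_of_le hmn le_rfl h2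
              exact coeff_pow_zero Y n hYord p.2 _ (by omega)
          · rfl
        rw [hz, mul_zero]
    · intro hno
      exfalso
      apply hno
      rw [Finset.mem_product, Finset.mem_range, Finset.mem_range]
      omega
  -- basic facts about g
  have hcfg : ∀ a b : ℕ, b ≤ a + k → cf g a b = cf f (a + k - b) b := by
    intro a b hab
    have h1 : cf (sigma1 f) (a + k) b = cf ((MvPowerSeries.X 0 : MvPowerSeries (Fin 2) K) ^ k * g)
        (a + k) b := by rw [hσ]
    rw [cf_X_pow_mul, if_pos (by omega), cf_sigma1, if_pos (by omega)] at h1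
    have he : a + k - k = a := by omega
    rw [he] at h1
    exact h1.symm
  have hSg : SigmaIm g k := by
    intro a b hab
    have h1 : cf (sigma1 f) (a + k) b = cf ((MvPowerSeries.X 0 : MvPowerSeries (Fin 2) K) ^ k * g)
        (a + k) b := by rw [hσ]
    rw [cf_X_pow_mul, if_pos (by omega), cf_sigma1, if_neg (by omega)] at h1
    have he : a + k - k = a := by omega
    rw [he] at h1
    exact h1.symm
  have hconst : cf g 0 0 = 0 := by
    rw [hcfg 0 0 (by omega)]
    simpa using hk0
  have hcol0 : col g 0 ≠ 0 := by
    obtain ⟨d, hd, hdne⟩ := hmult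
    intro hz
    apply hdne
    rw [coeff_cf]
    have h1 : cf g 0 (d 1) = cf f (0 + k - d 1) (d 1) := hcfg 0 (d 1) (by omega)
    rw [← coeff_col, hz, map_zero] at h1
    have he : 0 + k - d 1 = d 0 := by omega
    rw [he] at h1
    exact h1.symm
  refine ⟨Y', hYY', irreducible_g hf k hσ hcol0 hconst, ?_, ?_⟩
  · -- EvalZero g (X^m) Y'
    intro N
    have hv := hvan (N + m * k)
    -- rewrite everything through cf
    have key : ∑ p ∈ Finset.range (N + 1) ×ˢ Finset.range (N + 1),
        cf g p.1 p.2 * PowerSeries.coeff N ((PowerSeries.X ^ m) ^ p.1 * Y' ^ p.2)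
        = ∑ p ∈ Finset.range (N + m * k + 1) ×ˢ Finset.range (N + m * k + 1),
        cf f p.1 p.2 * PowerSeries.coeff (N + m * k) ((PowerSeries.X ^ m) ^ p.1 * Y ^ p.2) := by
      have hstep1 : ∑ p ∈ (Finset.range (N + 1) ×ˢ Finset.range (N + 1)).filter
            (fun p => p.2 ≤ p.1 + k),
          cf g p.1 p.2 * PowerSeries.coeff N ((PowerSeries.X ^ m) ^ p.1 * Y' ^ p.2)
          = ∑ p ∈ Finset.range (N + 1) ×ˢ Finset.range (N + 1),
          cf g p.1 p.2 * PowerSeries.coeff N ((PowerSeries.X ^ m) ^ p.1 * Y' ^ p.2) := by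
        refine Finset.sum_filter_of_ne fun p hp hne => ?_
        by_contra hcon
        exact hne (by rw [hSg p.1 p.2 (by omega), zero_mul])
      have hstep2 : ∑ p ∈ (Finset.range (N + m * k + 1) ×ˢ Finset.range (N + m * k + 1)).filter
            (fun p => k ≤ p.1 + p.2 ∧ p.1 + p.2 ≤ N + k ∧ p.2 ≤ N),
          cf f p.1 p.2 * PowerSeries.coeff (N + m * k) ((PowerSeries.X ^ m) ^ p.1 * Y ^ p.2)
          = ∑ p ∈ Finset.range (N + m * k + 1) ×ˢ Finset.range (N + m * k + 1),
          cf f p.1 p.2 * PowerSeries.coeff (N + m * k) ((PowerSeries.X ^ m) ^ p.1 * Y ^ p.2) := by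
        refine Finset.sum_filter_of_ne fun p hp hne => ?_
        simp only [Finset.mem_product, Finset.mem_range] at hp
        by_contra hcon
        push_neg at hcon
        rcases lt_or_ge (p.1 + p.2) k with h | h
        · exact hne (by rw [hcff p h, zero_mul])
        have hYpow : Y ^ p.2 = (PowerSeries.X ^ m) ^ p.2 * Y' ^ p.2 := by
          rw [hYY', mul_pow]
        have hXX : (PowerSeries.X ^ m : PowerSeries K) ^ p.1 *
            ((PowerSeries.X ^ m) ^ p.2 * Y' ^ p.2)
            = PowerSeries.X ^ (m * (p.1 + p.2)) * Y' ^ p.2 := by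
          rw [← mul_assoc, ← pow_add, ← pow_mul]
        rcases lt_or_ge (N + k) (p.1 + p.2) with h2 | h2
        · -- total degree too big
          refine hne ?_
          rw [hYpow, hXX, PowerSeries.coeff_X_pow_mul', if_neg, mul_zero]
          have ha : m * (N + k + 1) ≤ m * (p.1 + p.2) := Nat.mul_le_mul_left m (by omega)
          have hb : m * (N + k + 1) = m * N + m * k + m := by ring
          have hc : N ≤ m * N := Nat.le_mul_of_pos_left N hm
          omega
        · -- p.2 > N
          have h3 : N < p.2 := by
            rcases hcon h h2 with h4
            omega
          refine hne ?_
          rw [hYpow, hXX, PowerSeries.coeff_X_pow_mul']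
          split_ifs with hle
          · have ha : m * k ≤ m * (p.1 + p.2) := Nat.mul_le_mul_left m h
            have hb : p.2 ≤ (n - m) * p.2 := Nat.le_mul_of_pos_left p.2 (by omega)
            rw [coeff_pow_zero Y' (n - m) hY'ord p.2 _ (by omega), mul_zero]
          · rw [mul_zero]
      rw [← hstep1, ← hstep2]
      refine Finset.sum_nbij' (i := fun p : ℕ × ℕ => (p.1 + k - p.2, p.2))
        (j := fun p : ℕ × ℕ => (p.1 + p.2 - k, p.2)) ?_ ?_ ?_ ?_ ?_
      · intro p hp
        simp only [Finset.mem_filter, Finset.mem_product, Finset.mem_range] at hp ⊢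
        omega
      · intro p hp
        simp only [Finset.mem_filter, Finset.mem_product, Finset.mem_range] at hp ⊢
        omega
      · intro p hp
        simp only [Finset.mem_filter, Finset.mem_product, Finset.mem_range] at hp
        have e1 : p.1 + k - p.2 + p.2 - k = p.1 := by omega
        dsimp only
        rw [e1]
      · intro p hp
        simp only [Finset.mem_filter, Finset.mem_product, Finset.mem_range] at hp
        have e1 : p.1 + p.2 - k + k - p.2 = p.1 := by omega
        dsimp only
        rw [e1]
      · intro p hp
        simp only [Finset.mem_filter, Finset.mem_product, Finset.mem_range] at hp
        dsimp only
        rw [hcfg p.1 p.2 (by omega)]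
        congr 1
        -- coefficient identity
        have hYpow : Y ^ p.2 = (PowerSeries.X ^ m) ^ p.2 * Y' ^ p.2 := by
          rw [hYY', mul_pow]
        have hXX : (PowerSeries.X ^ m : PowerSeries K) ^ (p.1 + k - p.2) *
            ((PowerSeries.X ^ m) ^ p.2 * Y' ^ p.2)
            = PowerSeries.X ^ (m * (p.1 + k)) * Y' ^ p.2 := by
          rw [← mul_assoc, ← pow_add, ← pow_mul]
          congr 2
          have : p.1 + k - p.2 + p.2 = p.1 + k := by omega
          rw [this]
        have hma : m * (p.1 + k) = m * p.1 + m * k := by ring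
        rw [hYpow, hXX, hma, ← pow_mul, PowerSeries.coeff_X_pow_mul',
          PowerSeries.coeff_X_pow_mul']
        by_cases hle : m * p.1 ≤ N
        · rw [if_pos hle, if_pos (by omega)]
          have hc2 : N + m * k - (m * p.1 + m * k) = N - m * p.1 := by omega
          rw [hc2]
        · rw [if_neg hle, if_neg (by omega)]
    calc ∑ p ∈ Finset.range (N + 1) ×ˢ Finset.range (N + 1),
          (MvPowerSeries.coeff (Finsupp.single 0 p.1 + Finsupp.single 1 p.2)) g *
            (PowerSeries.coeff N) ((PowerSeries.X ^ m) ^ p.1 * Y' ^ p.2)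
        = ∑ p ∈ Finset.range (N + m * k + 1) ×ˢ Finset.range (N + m * k + 1),
          cf f p.1 p.2 * PowerSeries.coeff (N + m * k) ((PowerSeries.X ^ m) ^ p.1 * Y ^ p.2) :=
          key
      _ = 0 := hv
  · -- Puiseux characteristic
    intro G β e hP h2m
    obtain ⟨he0, heG, hstep⟩ := hP
    have hedvd : ∀ j, j < G → e j ∣ m := by
      intro j
      induction j with
      | zero => intro _; rw [he0]
      | succ j IH =>
        intro hj
        have hs := hstep j (by omega)
        rw [hs.2.2.2]
        exact dvd_trans (Nat.gcd_dvd_left _ _) (IH (by omega))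
    refine ⟨he0, heG, fun j hj => ?_⟩
    obtain ⟨hsupp, hndvd, hminl, hgcd⟩ := hstep j hj
    have hedm : e j ∣ m := hedvd j hj
    have hβn : n ≤ β (j + 1) := by
      by_contra hc
      exact hsupp (hYord _ (by omega))
    have hβm : m ≤ β (j + 1) := by omega
    refine ⟨?_, ?_, ?_, ?_⟩
    · show PowerSeries.coeff (β (j + 1) - m) Y' ≠ 0
      rw [hY'co]
      have he2 : m + (β (j + 1) - m) = β (j + 1) := by omega
      rw [he2]
      exact hsupp
    · show ¬ (e j ∣ β (j + 1) - m)
      intro hc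
      apply hndvd
      obtain ⟨c1, hc1⟩ := hedm
      obtain ⟨c2, hc2⟩ := hc
      refine ⟨c1 + c2, ?_⟩
      rw [Nat.mul_add, ← hc1, ← hc2]
      omega
    · show ∀ i : ℕ, PowerSeries.coeff i Y' ≠ 0 → ¬ (e j ∣ i) → β (j + 1) - m ≤ i
      intro i hsi hdi
      rw [hY'co] at hsi
      have h4 : ¬ (e j ∣ m + i) := by
        intro hc
        apply hdi
        obtain ⟨c1, hc1⟩ := hedm
        obtain ⟨c2, hc2⟩ := hc
        refine ⟨c2 - c1, ?_⟩
        rw [Nat.mul_sub, ← hc1, ← hc2]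
        omega
      have := hminl (m + i) hsi h4
      omega
    · show e (j + 1) = Nat.gcd (e j) (β (j + 1) - m)
      rw [hgcd]
      refine Nat.dvd_antisymm ?_ ?_
      · refine Nat.dvd_gcd (Nat.gcd_dvd_left _ _) ?_
        have h5 : Nat.gcd (e j) (β (j + 1)) ∣ m :=
          dvd_trans (Nat.gcd_dvd_left _ _) hedm
        exact Nat.dvd_sub (Nat.gcd_dvd_right _ _) h5
      · refine Nat.dvd_gcd (Nat.gcd_dvd_left _ _) ?_
        have h5 : Nat.gcd (e j) (β (j + 1) - m) ∣ m :=
          dvd_trans (Nat.gcd_dvd_left _ _) hedm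
        have h6 := Nat.gcd_dvd_right (e j) (β (j + 1) - m)
        have h7 := Nat.dvd_add h6 h5
        rwa [Nat.sub_add_cancel hβm] at h7

end MainProof

/-- Let `f` be an irreducible curve germ of multiplicity `k` with good
parametrization `x = t^m`, `y = Y(t)` where `ord Y = n > m`, and let `g` be its strict
transform under the quadratic transform `σ₁ : (x, y) ↦ (x, x·y)`, i.e.
`σ₁(f) = x^k · g`.  Then `g` is irreducible with good parametrization `x = t^m`,
`y = Y'(t)` where `Y = t^m · Y'`, and if `f` has Puiseux characteristic
`(m; β 1, …, β G)` with `β 1 > 2m`, then `g` has Puiseux characteristic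
`(m; β 1 - m, …, β G - m)` (with the same gcd sequence). -/
theorem strict_transform_parametrization {K : Type*} [Field K] [CharZero K] [IsAlgClosed K]
    (f g : MvPowerSeries (Fin 2) K) (hf : Irreducible f)
    (m n k : ℕ) (hm : 0 < m) (hmn : m < n)
    (Y : PowerSeries K)
    (hYord : ∀ i : ℕ, i < n → PowerSeries.coeff i Y = 0)
    (hYlead : PowerSeries.coeff n Y ≠ 0)
    (hvan : EvalZero f (PowerSeries.X ^ m) Y)
    (hgood : ∀ r : ℕ, 0 < r → (∀ i : ℕ, PowerSeries.coeff i Y ≠ 0 → r ∣ i) → r ∣ m → r = 1)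
    (hmultlow : ∀ d : Fin 2 →₀ ℕ, d 0 + d 1 < k → MvPowerSeries.coeff d f = 0)
    (hmult : ∃ d : Fin 2 →₀ ℕ, d 0 + d 1 = k ∧ MvPowerSeries.coeff d f ≠ 0)
    (hσ : sigma1 f = (MvPowerSeries.X 0) ^ k * g) :
    ∃ Y' : PowerSeries K,
      Y = PowerSeries.X ^ m * Y' ∧
      Irreducible g ∧
      EvalZero g (PowerSeries.X ^ m) Y' ∧
      ∀ (G : ℕ) (β e : ℕ → ℕ),
        PCharN m (fun i => PowerSeries.coeff i Y ≠ 0) G β e →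
        2 * m < β 1 →
        PCharN m (fun i => PowerSeries.coeff i Y' ≠ 0) G (fun j => β j - m) e := by
  exact strict_transform_parametrization' f g hf m n k hm hmn Y hYord hYlead hvan hgood
    hmultlow hmult hσ
end
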